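/- arXiv:2303.02251 — 6 statements merged into one kernel-verified Lean document; each statement's English description precedes it below -/
import Mathlib

section
/- If LP_N(D_n, D') ≤ 0 (i.e., there exists a coupling of D_n and D' with mass entirely on pairs (z,z') with z'−z ∈ N), then sup over such D' of E_{D'}[ℓ(θ,Z)] equals E_{D_n}[ max_{δ∈N, z+δ∈Z} ℓ(θ, z+δ) ]. That is, the adversarial training loss equals the worst-case expected loss over the zero-radius LP ball. -/
open scoped Pointwise BigOperators

/-- `p` is a probability distribution on the finite type `α`. -/
def IsDist {α : Type*} [Fintype α] (p : α → ℝ) : Prop :=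
  (∀ z, 0 ≤ p z) ∧ ∑ z, p z = 1

/-- Expected value of `f` under the distribution `p` on the finite type `α`. -/
def expect {α : Type*} [Fintype α] (p f : α → ℝ) : ℝ := ∑ z, p z * f z

/-- `γ` is a coupling of the distributions `p` and `q` on the finite type `α`. -/
def IsCoupling {α : Type*} [Fintype α] (γ : α × α → ℝ) (p q : α → ℝ) : Prop :=
  (∀ x, 0 ≤ γ x) ∧ (∀ z, ∑ z', γ (z, z') = p z) ∧ (∀ z', ∑ z, γ (z, z') = q z')

/-- The LP (optimal transport) discrepancy `LP_N(p, q)` between two distributions on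
a finite set `Z ⊆ ℝ^d`: the least coupling mass placed on pairs `(z, z')` with
`z' − z ∉ N`. -/
noncomputable def LPmetric {d : ℕ} {Z : Finset (Fin d → ℝ)} (N : Set (Fin d → ℝ))
    (p q : ↥Z → ℝ) : ℝ :=
  sInf {x | ∃ γ : ↥Z × ↥Z → ℝ, IsCoupling γ p q ∧
    x = ∑ w : ↥Z × ↥Z,
      Set.indicator {w : ↥Z × ↥Z | ¬ ((w.2 : Fin d → ℝ) - (w.1 : Fin d → ℝ)) ∈ N} γ w}

/-- Kullback–Leibler divergence between two distributions on a finite type, valued in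
the extended reals, with the conventions `0 log (0/q) = 0` and `p log (p/0) = ⊤` for
`p > 0`. -/
noncomputable def KLdiv {α : Type*} [Fintype α] (p q : α → ℝ) : EReal :=
  ∑ z, if p z = 0 then (0 : EReal) else
    if q z = 0 then (⊤ : EReal) else ((p z * Real.log (p z / q z) : ℝ) : EReal)

/-- Adversarial (evasion) loss: `ℓ^N(z) = max {f z' : z' ∈ Z, z' − z ∈ N}`. -/
noncomputable def advLoss {d : ℕ} (Z : Finset (Fin d → ℝ)) (N : Set (Fin d → ℝ))
    (f : ↥Z → ℝ) (z : ↥Z) : ℝ :=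
  sSup {v | ∃ z' : ↥Z, ((z' : Fin d → ℝ) - (z : Fin d → ℝ)) ∈ N ∧ v = f z'}

/-- the worst-case expected loss over the zero-radius LP ball
`{D' : LP_N(D_n, D') ≤ 0}` equals the adversarial training loss
`E_{D_n}[ max_{δ∈N, z+δ∈Z} ℓ(θ, z+δ) ]`. -/
theorem lp_zero_ball_sup_eq_adv_loss {d : ℕ} (Z : Finset (Fin d → ℝ))
    (N : Set (Fin d → ℝ)) (h0 : (0 : Fin d → ℝ) ∈ N) (hN : IsCompact N)
    (Dn : ↥Z → ℝ) (hDn : IsDist Dn) (f : ↥Z → ℝ) :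
    sSup {v | ∃ D' : ↥Z → ℝ, IsDist D' ∧ LPmetric N Dn D' ≤ 0 ∧ v = expect D' f}
      = expect Dn (advLoss Z N f) := by
  classical
  have hne : Nonempty ↥Z := by
    by_contra h
    rw [not_nonempty_iff] at h
    have h1 := hDn.2
    simp [Finset.univ_eq_empty] at h1
  set g := advLoss Z N f with hg
  have hfinS : ∀ z : ↥Z,
      {v | ∃ z' : ↥Z, ((z' : Fin d → ℝ) - (z : Fin d → ℝ)) ∈ N ∧ v = f z'}.Finite := by
    intro z
    apply (Set.finite_range f).subset
    rintro v ⟨z', -, rfl⟩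
    exact ⟨z', rfl⟩
  have hneS : ∀ z : ↥Z,
      Set.Nonempty {v | ∃ z' : ↥Z, ((z' : Fin d → ℝ) - (z : Fin d → ℝ)) ∈ N ∧ v = f z'} :=
    fun z => ⟨f z, z, by simpa using h0, rfl⟩
  have hadv_mem : ∀ z : ↥Z, ∃ z' : ↥Z,
      ((z' : Fin d → ℝ) - (z : Fin d → ℝ)) ∈ N ∧ g z = f z' :=
    fun z => (hneS z).csSup_mem (hfinS z)
  have hadv_ub : ∀ z z' : ↥Z, ((z' : Fin d → ℝ) - (z : Fin d → ℝ)) ∈ N → f z' ≤ g z :=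
    fun z z' h => le_csSup (hfinS z).bddAbove ⟨z', h, rfl⟩
  choose T hT1 hT2 using hadv_mem
  -- a uniform bound on f z' - g z
  obtain ⟨C, hCpos, hCb⟩ : ∃ C : ℝ, 0 < C ∧ ∀ z z' : ↥Z, f z' - g z ≤ C := by
    have hune : (Finset.univ : Finset (↥Z × ↥Z)).Nonempty := Finset.univ_nonempty
    refine ⟨max (Finset.univ.sup' hune fun w : ↥Z × ↥Z => f w.2 - g w.1) 0 + 1, ?_, ?_⟩
    · have := le_max_right (Finset.univ.sup' hune fun w : ↥Z × ↥Z => f w.2 - g w.1) 0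
      linarith
    · intro z z'
      have h1 := Finset.le_sup' (fun w : ↥Z × ↥Z => f w.2 - g w.1) (Finset.mem_univ (z, z'))
      dsimp only at h1
      have h2 := le_max_left (Finset.univ.sup' hune fun w : ↥Z × ↥Z => f w.2 - g w.1) 0
      linarith
  -- upper bound
  have hub : ∀ D' : ↥Z → ℝ, IsDist D' → LPmetric N Dn D' ≤ 0 →
      expect D' f ≤ expect Dn g := by
    intro D' hD' hLP
    refine le_of_forall_pos_le_add ?_
    intro ε hε
    set B : Set (↥Z × ↥Z) :=
      {w : ↥Z × ↥Z | ¬ ((w.2 : Fin d → ℝ) - (w.1 : Fin d → ℝ)) ∈ N} with hB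
    set SS : Set ℝ := {x | ∃ γ : ↥Z × ↥Z → ℝ, IsCoupling γ Dn D' ∧
      x = ∑ w : ↥Z × ↥Z, Set.indicator B γ w} with hSS
    have hSSne : SS.Nonempty := by
      refine ⟨∑ w : ↥Z × ↥Z, Set.indicator B (fun w => Dn w.1 * D' w.2) w,
        fun w => Dn w.1 * D' w.2, ⟨?_, ?_, ?_⟩, rfl⟩
      · exact fun w => mul_nonneg (hDn.1 w.1) (hD'.1 w.2)
      · intro z
        show (∑ z' : ↥Z, Dn z * D' z') = Dn z
        rw [← Finset.mul_sum, hD'.2, mul_one]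
      · intro z'
        show (∑ z : ↥Z, Dn z * D' z') = D' z'
        rw [← Finset.sum_mul, hDn.2, one_mul]
    have hLP' : sInf SS ≤ 0 := hLP
    obtain ⟨a, haSS, halt⟩ : ∃ a ∈ SS, a < sInf SS + ε / C :=
      Real.lt_sInf_add_pos hSSne (div_pos hε hCpos)
    have ha : a < ε / C := lt_of_lt_of_le halt (by linarith)
    obtain ⟨γ, hγ, haeq⟩ := haSS
    have h1 : expect D' f = ∑ w : ↥Z × ↥Z, γ w * f w.2 := by
      rw [expect, Fintype.sum_prod_type, Finset.sum_comm]
      refine Finset.sum_congr rfl fun z' _ => ?_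
      show D' z' * f z' = ∑ z : ↥Z, γ (z, z') * f z'
      rw [← Finset.sum_mul, hγ.2.2]
    have h2 : expect Dn g = ∑ w : ↥Z × ↥Z, γ w * g w.1 := by
      rw [expect, Fintype.sum_prod_type]
      refine Finset.sum_congr rfl fun z _ => ?_
      show Dn z * g z = ∑ z' : ↥Z, γ (z, z') * g z
      rw [← Finset.sum_mul, hγ.2.1]
    have key : ∑ w : ↥Z × ↥Z, γ w * f w.2 - ∑ w : ↥Z × ↥Z, γ w * g w.1
        ≤ a * C := by
      rw [← Finset.sum_sub_distrib, haeq, Finset.sum_mul]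
      refine Finset.sum_le_sum fun w _ => ?_
      by_cases hw : w ∈ B
      · rw [Set.indicator_of_mem hw]
        have := hCb w.1 w.2
        nlinarith [hγ.1 w]
      · rw [Set.indicator_of_notMem hw, zero_mul]
        have hgood : ((w.2 : Fin d → ℝ) - (w.1 : Fin d → ℝ)) ∈ N := not_not.mp hw
        have hle : f w.2 ≤ g w.1 := hadv_ub w.1 w.2 hgood
        nlinarith [hγ.1 w]
    have haC : a * C < ε := (lt_div_iff₀ hCpos).mp ha
    rw [h1, h2] at *
    linarith
  -- the maximizing distribution
  have hmem : expect Dn g ∈ {v | ∃ D' : ↥Z → ℝ, IsDist D' ∧ LPmetric N Dn D' ≤ 0 ∧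
      v = expect D' f} := by
    set D' : ↥Z → ℝ := fun z' => ∑ z, if T z = z' then Dn z else 0 with hD'
    set γ : ↥Z × ↥Z → ℝ := fun w => if T w.1 = w.2 then Dn w.1 else 0 with hγdef
    have hγnn : ∀ w, 0 ≤ γ w := by
      intro w; dsimp [γ]; split <;> [exact hDn.1 w.1; exact le_rfl]
    have hγcoup : IsCoupling γ Dn D' := by
      refine ⟨hγnn, fun z => ?_, fun z' => rfl⟩
      simp [γ, Finset.sum_ite_eq]
    have hD'dist : IsDist D' := by
      constructor
      · intro z'
        refine Finset.sum_nonneg fun z _ => ?_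
        split <;> [exact hDn.1 z; exact le_rfl]
      · rw [show ∑ z', D' z' = ∑ z' : ↥Z, ∑ z : ↥Z, if T z = z' then Dn z else 0 from rfl,
          Finset.sum_comm]
        simpa [Finset.sum_ite_eq] using hDn.2
    have hzero : (0 : ℝ) ∈ {x | ∃ γ : ↥Z × ↥Z → ℝ, IsCoupling γ Dn D' ∧
        x = ∑ w : ↥Z × ↥Z, Set.indicator
          {w : ↥Z × ↥Z | ¬ ((w.2 : Fin d → ℝ) - (w.1 : Fin d → ℝ)) ∈ N} γ w} := by
      refine ⟨γ, hγcoup, ?_⟩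
      symm
      refine Finset.sum_eq_zero fun w _ => ?_
      by_cases hw : w ∈ {w : ↥Z × ↥Z | ¬ ((w.2 : Fin d → ℝ) - (w.1 : Fin d → ℝ)) ∈ N}
      · rw [Set.indicator_of_mem hw]
        dsimp [γ]
        rw [if_neg]
        intro hTw
        exact hw (hTw ▸ hT1 w.1)
      · exact Set.indicator_of_notMem hw γ
    have hbdd : BddBelow {x | ∃ γ : ↥Z × ↥Z → ℝ, IsCoupling γ Dn D' ∧
        x = ∑ w : ↥Z × ↥Z, Set.indicator
          {w : ↥Z × ↥Z | ¬ ((w.2 : Fin d → ℝ) - (w.1 : Fin d → ℝ)) ∈ N} γ w} := by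
      refine ⟨0, ?_⟩
      rintro x ⟨γ', hγ', rfl⟩
      exact Finset.sum_nonneg fun w _ => Set.indicator_nonneg (fun a _ => hγ'.1 a) w
    have hLP0 : LPmetric N Dn D' ≤ 0 := csInf_le hbdd hzero
    have hval : expect Dn g = expect D' f := by
      rw [expect, expect]
      rw [show ∑ z', D' z' * f z'
          = ∑ z' : ↥Z, ∑ z : ↥Z, (if T z = z' then Dn z else 0) * f z' from by
        refine Finset.sum_congr rfl fun z' _ => ?_
        rw [← Finset.sum_mul], Finset.sum_comm]
      refine Finset.sum_congr rfl fun z _ => ?_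
      rw [hT2 z]
      simp [ite_mul, Finset.sum_ite_eq]
    exact ⟨D', hD'dist, hLP0, hval⟩
  have hubV : ∀ v ∈ {v | ∃ D' : ↥Z → ℝ, IsDist D' ∧ LPmetric N Dn D' ≤ 0 ∧
      v = expect D' f}, v ≤ expect Dn g := by
    rintro v ⟨D', hD', hLP, rfl⟩
    exact hub D' hD' hLP
  exact le_antisymm (csSup_le ⟨_, hmem⟩ hubV) (le_csSup ⟨_, hubV⟩ hmem)
end

section
/- Let Z be a finite set of cardinality m, D a distribution on Z, and D_n the empirical distribution of n i.i.d. samples from D. For any set A of distributions on Z, Pr(D_n ∈ A) ≤ (n+1)^m · exp(−n · inf_{P ∈ A} KL(P, D)). -/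
open scoped Pointwise BigOperators

open scoped Classical

/-- Probability weight of the sample `ω` of `n` i.i.d. draws from the distribution `D`
on a finite type. -/
def prodw {α : Type*} [Fintype α] (D : α → ℝ) (n : ℕ) (ω : Fin n → α) : ℝ :=
  ∏ i, D (ω i)

/-- Empirical distribution of the sample `ω : Fin n → α`. -/
noncomputable def emp {α : Type*} [Fintype α] [DecidableEq α] (n : ℕ) (ω : Fin n → α)
    (z : α) : ℝ :=
  ((Finset.univ.filter fun i => ω i = z).card : ℝ) / n

/-! Group the samples by their type, the empirical distribution `P = D_n`. A sample of type `P`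
has probability `∏ D(z)^{nP(z)} = exp(−n KL(P, D)) · ∏ P(z)^{nP(z)}` (and probability `0` when
`P` charges a zero of `D`). The samples of a fixed type `P` carry total `P^{⊗n}`-mass at most `1`,
so the maximum-likelihood weights `∏ P(z)^{nP(z)}`, summed over all samples, are bounded by the
number of types, which is at most `(n+1)^m` since each count lies in `{0, …, n}`. -/

open Finset Real

lemma EReal.coe_finset_sum {ι : Type*} (s : Finset ι) (f : ι → ℝ) :
    ((∑ i ∈ s, f i : ℝ) : EReal) = ∑ i ∈ s, (f i : EReal) :=
  map_sum (⟨⟨Real.toEReal, EReal.coe_zero⟩, EReal.coe_add⟩ : ℝ →+ EReal) f s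

/-- Off the support of `P` the conventions of `KLdiv` agree with `0 * log (0 / q) = 0`. -/
lemma KLdiv_eq_sum_mul_log {α : Type*} [Fintype α] {P Q : α → ℝ}
    (hPQ : ∀ z, P z ≠ 0 → Q z ≠ 0) :
    KLdiv P Q = ((∑ z, P z * log (P z / Q z) : ℝ) : EReal) := by
  rw [KLdiv, EReal.coe_finset_sum]
  refine sum_congr rfl fun z _ => ?_
  by_cases hP : P z = 0
  · simp [hP]
  · simp [hP, hPQ z hP]

lemma pow_eq_exp_mul_pow {p d : ℝ} (hp : 0 < p) (hd : 0 < d) (k : ℕ) :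
    d ^ k = exp (-(k * log (p / d))) * p ^ k := by
  rw [← mul_neg, ← log_inv, inv_div, exp_nat_mul, exp_log (div_pos hd hp), div_pow,
    div_mul_cancel₀ _ (pow_ne_zero _ hp.ne')]

section Sample

variable {α : Type*} {n : ℕ}

def sampleCount [DecidableEq α] (ω : Fin n → α) (z : α) : ℕ := #{i | ω i = z}

lemma sampleCount_le [DecidableEq α] (ω : Fin n → α) (z : α) : sampleCount ω z ≤ n :=
  (card_filter_le _ _).trans_eq (card_fin n)

variable [Fintype α]

lemma prodw_nonneg {P : α → ℝ} (hP : ∀ z, 0 ≤ P z) (ω : Fin n → α) : 0 ≤ prodw P n ω :=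
  prod_nonneg fun i _ => hP (ω i)

lemma sum_prodw (P : α → ℝ) : ∑ ω : Fin n → α, prodw P n ω = (∑ z, P z) ^ n := by
  simp only [prodw]
  rw [← Fintype.piFinset_univ, sum_prod_piFinset, prod_const, card_univ, Fintype.card_fin]

variable [DecidableEq α]

lemma sum_sampleCount (ω : Fin n → α) : ∑ z, sampleCount ω z = n := by
  simpa [sampleCount] using
    (card_eq_sum_card_fiberwise (s := univ) (t := univ) fun i _ => mem_univ (ω i)).symm

lemma prodw_eq_prod_pow_sampleCount (Q : α → ℝ) (ω : Fin n → α) :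
    prodw Q n ω = ∏ z, Q z ^ sampleCount ω z := by
  rw [prodw, ← prod_fiberwise univ ω]
  refine prod_congr rfl fun z _ => ?_
  rw [prod_congr rfl fun i hi => by rw [(mem_filter.mp hi).2], prod_const]
  rfl

lemma emp_eq_sampleCount_div (ω : Fin n → α) (z : α) : emp n ω z = sampleCount ω z / n := rfl

lemma emp_nonneg (ω : Fin n → α) (z : α) : 0 ≤ emp n ω z := by
  rw [emp_eq_sampleCount_div]; positivity

lemma sum_emp (hn : n ≠ 0) (ω : Fin n → α) : ∑ z, emp n ω z = 1 := by
  simp only [emp_eq_sampleCount_div, ← sum_div]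
  rw [div_eq_one_iff_eq (by exact_mod_cast hn)]
  exact_mod_cast sum_sampleCount ω

lemma sum_prodw_emp (ω₀ : Fin n → α) : ∑ ω, prodw (emp n ω₀) n ω = 1 := by
  rw [sum_prodw]
  rcases eq_or_ne n 0 with rfl | hn
  · exact pow_zero _
  · rw [sum_emp hn, one_pow]

lemma prodw_eq_exp_mul_prodw_emp {D : α → ℝ} (hD : ∀ z, 0 ≤ D z) (ω : Fin n → α)
    (hsupp : ∀ z, emp n ω z ≠ 0 → D z ≠ 0) :
    prodw D n ω = exp (-n * ∑ z, emp n ω z * log (emp n ω z / D z)) * prodw (emp n ω) n ω := by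
  simp only [prodw_eq_prod_pow_sampleCount, mul_sum, exp_sum, ← prod_mul_distrib]
  refine prod_congr rfl fun z _ => ?_
  rcases (sampleCount ω z).eq_zero_or_pos with hk | hk
  · simp [hk, emp_eq_sampleCount_div]
  have hn : 0 < n := hk.trans_le (sampleCount_le ω z)
  have hemp : 0 < emp n ω z := by rw [emp_eq_sampleCount_div]; positivity
  have hcount : (n : ℝ) * emp n ω z = sampleCount ω z := by
    rw [emp_eq_sampleCount_div]; field_simp
  rw [pow_eq_exp_mul_pow hemp ((hD z).lt_of_ne (hsupp z hemp.ne').symm), ← hcount]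
  ring_nf

lemma prodw_le_exp_mul_prodw_emp {D : α → ℝ} (hD : ∀ z, 0 ≤ D z) (ω : Fin n → α) {c : ℝ}
    (hc : (c : EReal) ≤ KLdiv (emp n ω) D) :
    prodw D n ω ≤ exp (-n * c) * prodw (emp n ω) n ω := by
  by_cases hsupp : ∀ z, emp n ω z ≠ 0 → D z ≠ 0
  · rw [KLdiv_eq_sum_mul_log hsupp, EReal.coe_le_coe_iff] at hc
    rw [prodw_eq_exp_mul_prodw_emp hD ω hsupp]
    exact mul_le_mul_of_nonneg_right
      (exp_le_exp.mpr (mul_le_mul_of_nonpos_left hc (neg_nonpos.mpr (Nat.cast_nonneg n))))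
      (prodw_nonneg (emp_nonneg ω) ω)
  · push Not at hsupp
    obtain ⟨z, hemp, hDz⟩ := hsupp
    have hk : sampleCount ω z ≠ 0 := fun hk => hemp (by simp [emp_eq_sampleCount_div, hk])
    rw [prodw_eq_prod_pow_sampleCount, prod_eq_zero (mem_univ z) (by rw [hDz, zero_pow hk])]
    exact mul_nonneg (exp_pos _).le (prodw_nonneg (emp_nonneg ω) ω)

variable (α n) in
lemma card_image_emp_le : #(univ.image (emp (α := α) n)) ≤ (n + 1) ^ Fintype.card α := by
  have hsub : univ.image (emp (α := α) n) ⊆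
      (univ : Finset (α → Fin (n + 1))).image fun k z => (k z : ℝ) / n := by
    rintro _ hP
    obtain ⟨ω, -, rfl⟩ := mem_image.mp hP
    exact mem_image.mpr
      ⟨fun z => ⟨sampleCount ω z, Nat.lt_succ_of_le (sampleCount_le ω z)⟩, mem_univ _, rfl⟩
  calc #(univ.image (emp (α := α) n))
      ≤ #((univ : Finset (α → Fin (n + 1))).image fun k z => (k z : ℝ) / n) := card_le_card hsub
    _ ≤ (n + 1) ^ Fintype.card α := card_image_le.trans_eq (by simp)

lemma sum_prodw_emp_le_card_image :
    ∑ ω : Fin n → α, prodw (emp n ω) n ω ≤ #(univ.image (emp (α := α) n)) := by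
  rw [← sum_fiberwise_of_maps_to (g := emp n) fun ω _ => mem_image_of_mem _ (mem_univ ω)]
  calc ∑ P ∈ univ.image (emp n), ∑ ω with emp n ω = P, prodw (emp n ω) n ω
      = ∑ P ∈ univ.image (emp n), ∑ ω with emp n ω = P, prodw P n ω :=
        sum_congr rfl fun P _ => sum_congr rfl fun ω hω => by rw [(mem_filter.mp hω).2]
    _ ≤ ∑ P ∈ univ.image (emp n), (1 : ℝ) := by
        refine sum_le_sum fun P hP => ?_
        obtain ⟨ω₀, -, rfl⟩ := mem_image.mp hP
        calc ∑ ω with emp n ω = emp n ω₀, prodw (emp n ω₀) n ω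
            ≤ ∑ ω, prodw (emp n ω₀) n ω :=
              sum_le_sum_of_subset_of_nonneg (subset_univ _)
                fun ω _ _ => prodw_nonneg (emp_nonneg ω₀) ω
          _ = 1 := sum_prodw_emp ω₀
    _ = #(univ.image (emp (α := α) n)) := by simp

end Sample

/-- The infimum of `KLdiv P D` over `P ∈ A` enters through an arbitrary real lower bound `c`; an
infimum equal to `+∞` corresponds to every `c` being admissible. -/
theorem sanov_upper_bound {α : Type*} [Fintype α] [DecidableEq α]
    (D : α → ℝ) (hD : IsDist D) (n : ℕ)
    (A : Set (α → ℝ)) (c : ℝ) (hc : ∀ P ∈ A, (c : EReal) ≤ KLdiv P D) :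
    ∑ ω : Fin n → α, (if emp n ω ∈ A then prodw D n ω else 0)
      ≤ ((n : ℝ) + 1) ^ (Fintype.card α) * Real.exp (-(n : ℝ) * c) := by
  have hterm : ∀ ω : Fin n → α,
      (if emp n ω ∈ A then prodw D n ω else 0) ≤ exp (-n * c) * prodw (emp n ω) n ω := by
    intro ω
    split_ifs with hA
    · exact prodw_le_exp_mul_prodw_emp hD.1 ω (hc _ hA)
    · exact mul_nonneg (exp_pos _).le (prodw_nonneg (emp_nonneg ω) ω)
  have htypes : ∑ ω : Fin n → α, prodw (emp n ω) n ω ≤ ((n : ℝ) + 1) ^ Fintype.card α :=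
    sum_prodw_emp_le_card_image.trans (by exact_mod_cast card_image_emp_le α n)
  calc ∑ ω : Fin n → α, (if emp n ω ∈ A then prodw D n ω else 0)
      ≤ exp (-n * c) * ∑ ω : Fin n → α, prodw (emp n ω) n ω := by
        rw [mul_sum]; exact sum_le_sum fun ω _ => hterm ω
    _ ≤ exp (-n * c) * ((n : ℝ) + 1) ^ Fintype.card α := by gcongr
    _ = ((n : ℝ) + 1) ^ Fintype.card α * exp (-n * c) := mul_comm _ _
end

section
/- Strassen-type identity for a ball: for probability distributions P, Q on a finite metric space Z and δ > 0, LP_{B(0,δ)}(P,Q) ≤ δ if and only if π(P,Q) ≤ δ, where π is the Lévy–Prokhorov distance. Formally: there exists a coupling γ of P,Q with γ({(z,z'): d(z,z') > δ}) ≤ δ if and only if for every set A ⊆ Z, P(A) ≤ Q(A^δ) + δ, where A^δ is the δ-neighborhood of A. -/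
open scoped Pointwise BigOperators

section StrassenAux

set_option linter.unusedSectionVars false

namespace StrassenAux

variable {Z : Type*} [Fintype Z] [DecidableEq Z]

/-- Row marginal of a (sub-)coupling. -/
def rowsum (γ : Z × Z → ℝ) (z : Z) : ℝ := ∑ z', γ (z, z')

/-- Column marginal of a (sub-)coupling. -/
def colsum (γ : Z × Z → ℝ) (z' : Z) : ℝ := ∑ z, γ (z, z')

/-- Total mass of a (sub-)coupling. -/
def mass (γ : Z × Z → ℝ) : ℝ := ∑ w, γ w

lemma sum_rowsum (γ : Z × Z → ℝ) : ∑ z, rowsum γ z = mass γ := by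
  rw [mass, Fintype.sum_prod_type]; rfl

lemma sum_colsum (γ : Z × Z → ℝ) : ∑ z', colsum γ z' = mass γ := by
  rw [mass, Fintype.sum_prod_type]; rw [Finset.sum_comm]; rfl

/-- Add `ε` to a single entry of `γ`. -/
def bump (γ : Z × Z → ℝ) (a : Z × Z) (ε : ℝ) : Z × Z → ℝ :=
  fun w => γ w + if w = a then ε else 0

lemma bump_rowsum (γ : Z × Z → ℝ) (a : Z × Z) (ε : ℝ) (z : Z) :
    rowsum (bump γ a ε) z = rowsum γ z + if z = a.1 then ε else 0 := by
  obtain ⟨a1, a2⟩ := a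
  simp only [rowsum, bump, Finset.sum_add_distrib, Prod.mk.injEq]
  congr 1
  by_cases h : z = a1 <;> simp [h, Finset.sum_ite_eq']

lemma bump_colsum (γ : Z × Z → ℝ) (a : Z × Z) (ε : ℝ) (z' : Z) :
    colsum (bump γ a ε) z' = colsum γ z' + if z' = a.2 then ε else 0 := by
  obtain ⟨a1, a2⟩ := a
  simp only [colsum, bump, Finset.sum_add_distrib, Prod.mk.injEq]
  congr 1
  by_cases h : z' = a2 <;> simp [h, Finset.sum_ite_eq']

lemma bump_mass (γ : Z × Z → ℝ) (a : Z × Z) (ε : ℝ) :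
    mass (bump γ a ε) = mass γ + ε := by
  simp [mass, bump, Finset.sum_add_distrib, Finset.sum_ite_eq']

section Metric
variable [MetricSpace Z] (P Q : Z → ℝ) (δ : ℝ)

/-- Feasible sub-coupling supported on close pairs. -/
def Feas (γ : Z × Z → ℝ) : Prop :=
  (∀ w, 0 ≤ γ w) ∧ (∀ z, rowsum γ z ≤ P z) ∧ (∀ z', colsum γ z' ≤ Q z') ∧
  (∀ w : Z × Z, δ < dist w.1 w.2 → γ w = 0)

/-- Left vertices reachable from a deficient row along an alternating path of length `n`. -/
inductive ReachL (γ : Z × Z → ℝ) : ℕ → Z → Prop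
  | base (z : Z) : rowsum γ z < P z → ReachL γ 0 z
  | step (n : ℕ) (z z₀ z' : Z) : ReachL γ n z₀ → dist z₀ z' ≤ δ → 0 < γ (z, z') →
      ReachL γ (n + 1) z

lemma ReachL.mono {γ γ' : Z × Z → ℝ} (hrow : ∀ z, rowsum γ' z = rowsum γ z)
    (hpos : ∀ w, 0 < γ w → 0 < γ' w) :
    ∀ {n z}, ReachL P δ γ n z → ReachL P δ γ' n z := by
  intro n z h
  induction h with
  | base z h => exact ReachL.base z (by rw [hrow]; exact h)
  | step n z z₀ z' _ hd hg ih => exact ReachL.step n z z₀ z' ih hd (hpos _ hg)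

/-- Augmenting path lemma: if a column with slack is adjacent to a reachable left
vertex, the total mass can be strictly increased. -/
lemma augment : ∀ (n : ℕ) (γ : Z × Z → ℝ), Feas P Q δ γ →
    ∀ z z', ReachL P δ γ n z → dist z z' ≤ δ → colsum γ z' < Q z' →
    ∃ γ', Feas P Q δ γ' ∧ mass γ < mass γ' := by
  intro n
  induction n with
  | zero =>
    intro γ hγ z z' hre hd hc
    cases hre with
    | base _ hrow =>
      obtain ⟨hpos, hr, hcb, hsupp⟩ := hγ
      set ε : ℝ := min (P z - rowsum γ z) (Q z' - colsum γ z') with hε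
      have hε0 : 0 < ε := lt_min (by linarith) (by linarith)
      refine ⟨bump γ (z, z') ε, ⟨?_, ?_, ?_, ?_⟩, ?_⟩
      · intro w; unfold bump; split <;> [linarith [hpos w]; simpa using hpos w]
      · intro z₁; rw [bump_rowsum]
        by_cases h : z₁ = z
        · subst h
          simp only [if_pos rfl, if_true]
          have h1 := min_le_left (P z₁ - rowsum γ z₁) (Q z' - colsum γ z')
          rw [hε]; linarith
        · simp [h]; exact hr z₁
      · intro z₁; rw [bump_colsum]
        by_cases h : z₁ = z'
        · subst h
          simp only [if_pos rfl, if_true]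
          have h1 := min_le_right (P z - rowsum γ z) (Q z₁ - colsum γ z₁)
          rw [hε]; linarith
        · simp [h]; exact hcb z₁
      · intro w hw; unfold bump
        have h0 := hsupp w hw
        by_cases h : w = (z, z')
        · subst h; exact absurd hd (by simpa using not_le.mpr hw)
        · simp [h]; exact h0
      · rw [bump_mass]; linarith
  | succ n ih =>
    intro γ hγ z z' hre hd hc
    cases hre with
    | step _ _ z₀ w hre0 hdw hgw =>
      by_cases hw : z' = w
      · subst hw
        exact ih γ hγ z₀ z' hre0 hdw hc
      · obtain ⟨hpos, hr, hcb, hsupp⟩ := hγ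
        set ε : ℝ := min (γ (z, w) / 2) (Q z' - colsum γ z') with hε
        have hε0 : 0 < ε := lt_min (by linarith) (by linarith)
        have hεlt : ε < γ (z, w) := lt_of_le_of_lt (min_le_left _ _) (by linarith)
        set γ₂ : Z × Z → ℝ := bump (bump γ (z, z') ε) (z, w) (-ε) with hγ₂
        have hne : (z, z') ≠ (z, w) := by simp [Prod.ext_iff, hw]
        have hγ₂val : ∀ u, γ₂ u = γ u + (if u = (z, z') then ε else 0)
            + (if u = (z, w) then -ε else 0) := by intro u; rfl
        have hpos2 : ∀ u, 0 ≤ γ₂ u := by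
          intro u; rw [hγ₂val]
          by_cases h1 : u = (z, z')
          · subst h1; simp [hne]; linarith [hpos (z, z')]
          · by_cases h2 : u = (z, w)
            · subst h2; simp [h1]; linarith
            · simp [h1, h2]; exact hpos u
        have hrow2 : ∀ z₁, rowsum γ₂ z₁ = rowsum γ z₁ := by
          intro z₁; rw [hγ₂, bump_rowsum, bump_rowsum]; by_cases h : z₁ = z <;> simp [h]
        have hcol2 : ∀ z₁, colsum γ₂ z₁ = colsum γ z₁
            + (if z₁ = z' then ε else 0) + (if z₁ = w then -ε else 0) := by
          intro z₁; rw [hγ₂, bump_colsum, bump_colsum]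
        have hfeas2 : Feas P Q δ γ₂ := by
          refine ⟨hpos2, fun z₁ => by rw [hrow2]; exact hr z₁, ?_, ?_⟩
          · intro z₁; rw [hcol2]
            by_cases h1 : z₁ = z'
            · subst h1; simp [hw]
              have : ε ≤ Q z₁ - colsum γ z₁ := min_le_right _ _; linarith
            · by_cases h2 : z₁ = w
              · subst h2; simp [h1]; linarith [hcb z₁]
              · simp [h1, h2]; exact hcb z₁
          · intro u hu; rw [hγ₂val]
            have h0 := hsupp u hu
            by_cases h1 : u = (z, z')
            · exact absurd hd (by subst h1; simpa using not_le.mpr hu)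
            · by_cases h2 : u = (z, w)
              · subst h2; exact absurd (hsupp _ hu) hgw.ne'
              · simp [h0, h1, h2]
        have hmass2 : mass γ₂ = mass γ := by rw [hγ₂, bump_mass, bump_mass]; ring
        have hre2 : ReachL P δ γ₂ n z₀ := by
          refine ReachL.mono P δ hrow2 ?_ hre0
          intro u hu; rw [hγ₂val]
          by_cases h1 : u = (z, z')
          · subst h1; simp [hne]; linarith
          · by_cases h2 : u = (z, w)
            · subst h2; simp [h1]; linarith
            · simp [h1, h2]; exact hu
        have hslack : colsum γ₂ w < Q w := by
          rw [hcol2]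
          have hw' : ¬ (w = z') := fun h => hw h.symm
          simp only [hw', if_false, if_pos rfl, if_true, add_zero]
          have := hcb w
          linarith
        obtain ⟨γ₃, hf3, hm3⟩ := ih γ₂ hfeas2 z₀ w hre2 hdw hslack
        exact ⟨γ₃, hf3, by rw [← hmass2]; exact hm3⟩

/-- A maximal feasible sub-coupling exists. -/
lemma exists_max (hP : ∀ z, 0 ≤ P z) (hQ : ∀ z, 0 ≤ Q z) :
    ∃ γ, Feas P Q δ γ ∧ ∀ γ', Feas P Q δ γ' → mass γ' ≤ mass γ := by
  have h0 : Feas P Q δ (0 : Z × Z → ℝ) := by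
    refine ⟨fun w => le_refl 0, fun z => ?_, fun z' => ?_, fun w _ => rfl⟩ <;>
      simp [rowsum, colsum, hP, hQ]
  have hsub : {γ : Z × Z → ℝ | Feas P Q δ γ} ⊆
      Set.Icc (0 : Z × Z → ℝ) (fun w => P w.1) := by
    rintro γ ⟨hpos, hrow, -, -⟩
    constructor
    · intro w; exact hpos w
    · intro w
      calc γ w = γ (w.1, w.2) := by rw [Prod.mk.eta]
        _ ≤ rowsum γ w.1 := Finset.single_le_sum (fun i _ => hpos (w.1, i)) (Finset.mem_univ w.2)
        _ ≤ P w.1 := hrow w.1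
  have hcls : IsClosed {γ : Z × Z → ℝ | Feas P Q δ γ} := by
    have h1 : ∀ w : Z × Z, IsClosed {γ : Z × Z → ℝ | 0 ≤ γ w} :=
      fun w => isClosed_le continuous_const (continuous_apply w)
    have hrowc : ∀ z : Z, Continuous (fun γ : Z × Z → ℝ => rowsum γ z) :=
      fun z => continuous_finset_sum _ (fun z' _ => continuous_apply (z, z'))
    have hcolc : ∀ z' : Z, Continuous (fun γ : Z × Z → ℝ => colsum γ z') :=
      fun z' => continuous_finset_sum _ (fun z _ => continuous_apply (z, z'))
    have : {γ : Z × Z → ℝ | Feas P Q δ γ} =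
        (⋂ w, {γ : Z × Z → ℝ | 0 ≤ γ w}) ∩
        ((⋂ z, {γ | rowsum γ z ≤ P z}) ∩
        ((⋂ z', {γ | colsum γ z' ≤ Q z'}) ∩
        (⋂ w ∈ {w : Z × Z | δ < dist w.1 w.2}, {γ | γ w = 0}))) := by
      ext γ; simp only [Feas, Set.mem_setOf_eq, Set.mem_inter_iff, Set.mem_iInter]
    rw [this]
    refine ((isClosed_iInter h1).inter (((isClosed_iInter fun z =>
      isClosed_le (hrowc z) continuous_const)).inter
      ((isClosed_iInter fun z' => isClosed_le (hcolc z') continuous_const).inter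
      (isClosed_biInter fun w _ => isClosed_eq (continuous_apply w) continuous_const))))
  have hcpt : IsCompact {γ : Z × Z → ℝ | Feas P Q δ γ} :=
    (isCompact_Icc).of_isClosed_subset hcls hsub
  have hmc : Continuous (mass : (Z × Z → ℝ) → ℝ) :=
    continuous_finset_sum _ (fun w _ => continuous_apply w)
  obtain ⟨γ, hγ, hmax⟩ := hcpt.exists_isMaxOn ⟨0, h0⟩ hmc.continuousOn
  exact ⟨γ, hγ, fun γ' hγ' => hmax hγ'⟩

/-- Min-cut bound at a maximizer. -/
lemma cut_bound (γ : Z × Z → ℝ) (hγ : Feas P Q δ γ)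
    (hmax : ∀ γ', Feas P Q δ γ' → mass γ' ≤ mass γ)
    (H : ∀ A : Finset Z,
        ∑ z ∈ A, P z ≤
          (∑ z' ∈ Finset.univ.filter (fun z' : Z => ∃ z ∈ A, dist z z' ≤ δ), Q z') + δ) :
    ∑ z, P z - mass γ ≤ δ := by
  classical
  obtain ⟨hpos, hrow, hcol, hsupp⟩ := hγ
  have noaug : ∀ (n : ℕ) (z z' : Z), ReachL P δ γ n z → dist z z' ≤ δ →
      colsum γ z' = Q z' := by
    intro n z z' hre hd
    refine le_antisymm (hcol z') (not_lt.mp fun hlt => ?_)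
    obtain ⟨γ', hf', hm'⟩ := augment P Q δ n γ ⟨hpos, hrow, hcol, hsupp⟩ z z' hre hd hlt
    exact absurd (hmax γ' hf') (not_le.mpr hm')
  set A : Finset Z := Finset.univ.filter (fun z => ∃ n, ReachL P δ γ n z) with hA
  set B : Finset Z := Finset.univ.filter (fun z' : Z => ∃ z ∈ A, dist z z' ≤ δ) with hB
  have hAmem : ∀ z, z ∈ A ↔ ∃ n, ReachL P δ γ n z := by
    intro z; simp [hA]
  have claim1 : ∑ z ∈ A, (P z - rowsum γ z) = ∑ z, (P z - rowsum γ z) := by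
    refine Finset.sum_subset (f := fun z => P z - rowsum γ z) (Finset.subset_univ A) ?_
    intro z _ hz
    have h1 : ¬ (rowsum γ z < P z) := fun h => hz ((hAmem z).mpr ⟨0, ReachL.base z h⟩)
    have h2 := hrow z
    show P z - rowsum γ z = 0
    linarith
  have claim2 : ∀ z' ∈ B, colsum γ z' = Q z' := by
    intro z' hz'
    rw [hB, Finset.mem_filter] at hz'
    obtain ⟨-, z, hzA, hd⟩ := hz'
    obtain ⟨n, hre⟩ := (hAmem z).mp hzA
    exact noaug n z z' hre hd
  have claim3 : ∀ z' ∈ B, ∀ z, z ∉ A → γ (z, z') = 0 := by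
    intro z' hz' z hz
    rw [hB, Finset.mem_filter] at hz'
    obtain ⟨-, z₀, hz₀A, hd⟩ := hz'
    obtain ⟨n, hre⟩ := (hAmem z₀).mp hz₀A
    by_contra h
    have hgt : 0 < γ (z, z') := lt_of_le_of_ne (hpos (z, z')) (Ne.symm h)
    exact hz ((hAmem z).mpr ⟨n + 1, ReachL.step n z z₀ z' hre hd hgt⟩)
  have key : ∑ z' ∈ B, Q z' ≤ ∑ z ∈ A, rowsum γ z := by
    have e1 : ∑ z ∈ A, rowsum γ z = ∑ z' : Z, ∑ z ∈ A, γ (z, z') := by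
      rw [Finset.sum_comm]; rfl
    have e2 : ∀ z' ∈ B, ∑ z ∈ A, γ (z, z') = Q z' := by
      intro z' hz'
      rw [← claim2 z' hz', colsum]
      exact Finset.sum_subset (Finset.subset_univ A) (fun z _ hz => claim3 z' hz' z hz)
    calc ∑ z' ∈ B, Q z' = ∑ z' ∈ B, ∑ z ∈ A, γ (z, z') := by
          exact (Finset.sum_congr rfl e2).symm
      _ ≤ ∑ z' : Z, ∑ z ∈ A, γ (z, z') := by
          refine Finset.sum_le_sum_of_subset_of_nonneg (Finset.subset_univ B) ?_
          intro z' _ _; exact Finset.sum_nonneg fun z _ => hpos (z, z')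
      _ = ∑ z ∈ A, rowsum γ z := e1.symm
  have hPA : ∑ z ∈ A, P z = (∑ z, P z - mass γ) + ∑ z ∈ A, rowsum γ z := by
    have : ∑ z ∈ A, P z = ∑ z ∈ A, (P z - rowsum γ z) + ∑ z ∈ A, rowsum γ z := by
      rw [← Finset.sum_add_distrib]; simp
    rw [this, claim1, Finset.sum_sub_distrib, sum_rowsum]
  have := H A
  rw [← hB] at this
  linarith

end Metric
end StrassenAux
end StrassenAux
/-- Strassen-type identity: for probability distributions `P, Q` on a
finite metric space and `δ > 0`, there exists a coupling `γ` of `P, Q` with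
`γ({(z,z') : d(z,z') > δ}) ≤ δ` iff for every set `A`, `P(A) ≤ Q(A^δ) + δ`, where
`A^δ = {z' : ∃ z ∈ A, d(z,z') ≤ δ}` is the `δ`-neighborhood of `A`. -/
theorem strassen_levy_prokhorov {Z : Type*} [Fintype Z] [MetricSpace Z]
    (P Q : Z → ℝ) (hP : IsDist P) (hQ : IsDist Q) (δ : ℝ) (hδ : 0 < δ) :
    (∃ γ : Z × Z → ℝ, IsCoupling γ P Q ∧
        ∑ w : Z × Z, Set.indicator {w : Z × Z | δ < dist w.1 w.2} γ w ≤ δ) ↔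
      (∀ A : Finset Z,
        ∑ z ∈ A, P z ≤
          (∑ z' ∈ Finset.univ.filter (fun z' : Z => ∃ z ∈ A, dist z z' ≤ δ), Q z') + δ) := by
  classical
  have indicator_sum : ∀ γ : Z × Z → ℝ,
      ∑ w : Z × Z, Set.indicator {w : Z × Z | δ < dist w.1 w.2} γ w
        = ∑ w ∈ Finset.univ.filter (fun w : Z × Z => δ < dist w.1 w.2), γ w := by
    intro γ
    rw [Finset.sum_filter]
    refine Finset.sum_congr rfl fun w _ => ?_
    by_cases h : δ < dist w.1 w.2 <;> simp [Set.indicator_apply, h]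
  constructor
  · -- forward: coupling with small far mass gives the LP inequalities
    rintro ⟨γ, ⟨hg0, hgr, hgc⟩, hfar⟩ A
    set B := Finset.univ.filter (fun z' : Z => ∃ z ∈ A, dist z z' ≤ δ) with hB
    have hsplit : ∀ z : Z, P z =
        (∑ z' ∈ Finset.univ.filter (fun z' => dist z z' ≤ δ), γ (z, z'))
        + ∑ z' ∈ Finset.univ.filter (fun z' => ¬ dist z z' ≤ δ), γ (z, z') := by
      intro z; rw [Finset.sum_filter_add_sum_filter_not]; exact (hgr z).symm
    have hnear : ∑ z ∈ A, ∑ z' ∈ Finset.univ.filter (fun z' => dist z z' ≤ δ), γ (z, z')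
        ≤ ∑ z' ∈ B, Q z' := by
      have step1 : ∀ z ∈ A,
          ∑ z' ∈ Finset.univ.filter (fun z' => dist z z' ≤ δ), γ (z, z')
          ≤ ∑ z' ∈ B, γ (z, z') := by
        intro z hz
        refine Finset.sum_le_sum_of_subset_of_nonneg ?_ (fun z' _ _ => hg0 (z, z'))
        intro z' hz'
        rw [Finset.mem_filter] at hz'
        rw [hB, Finset.mem_filter]
        exact ⟨Finset.mem_univ z', z, hz, hz'.2⟩
      calc ∑ z ∈ A, ∑ z' ∈ Finset.univ.filter (fun z' => dist z z' ≤ δ), γ (z, z')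
          ≤ ∑ z ∈ A, ∑ z' ∈ B, γ (z, z') := Finset.sum_le_sum step1
        _ ≤ ∑ z : Z, ∑ z' ∈ B, γ (z, z') := by
            refine Finset.sum_le_sum_of_subset_of_nonneg (Finset.subset_univ A) ?_
            intro z _ _; exact Finset.sum_nonneg fun z' _ => hg0 (z, z')
        _ = ∑ z' ∈ B, ∑ z : Z, γ (z, z') := Finset.sum_comm
        _ = ∑ z' ∈ B, Q z' := Finset.sum_congr rfl fun z' _ => hgc z'
    have hfar2 : ∑ z ∈ A, ∑ z' ∈ Finset.univ.filter (fun z' => ¬ dist z z' ≤ δ), γ (z, z')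
        ≤ δ := by
      have e : ∑ w ∈ Finset.univ.filter (fun w : Z × Z => δ < dist w.1 w.2), γ w
          = ∑ z : Z, ∑ z' ∈ Finset.univ.filter (fun z' => ¬ dist z z' ≤ δ), γ (z, z') := by
        rw [Finset.sum_filter, Fintype.sum_prod_type]
        refine Finset.sum_congr rfl fun z _ => ?_
        rw [Finset.sum_filter]
        refine Finset.sum_congr rfl fun z' _ => ?_
        simp [not_le]
      have hle : ∑ z ∈ A, ∑ z' ∈ Finset.univ.filter (fun z' => ¬ dist z z' ≤ δ), γ (z, z')
          ≤ ∑ z : Z, ∑ z' ∈ Finset.univ.filter (fun z' => ¬ dist z z' ≤ δ), γ (z, z') := by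
        refine Finset.sum_le_sum_of_subset_of_nonneg (Finset.subset_univ A) ?_
        intro z _ _; exact Finset.sum_nonneg fun z' _ => hg0 (z, z')
      rw [indicator_sum, e] at hfar
      linarith
    calc ∑ z ∈ A, P z
        = ∑ z ∈ A, ((∑ z' ∈ Finset.univ.filter (fun z' => dist z z' ≤ δ), γ (z, z'))
          + ∑ z' ∈ Finset.univ.filter (fun z' => ¬ dist z z' ≤ δ), γ (z, z')) :=
          Finset.sum_congr rfl fun z _ => hsplit z
      _ = (∑ z ∈ A, ∑ z' ∈ Finset.univ.filter (fun z' => dist z z' ≤ δ), γ (z, z'))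
          + ∑ z ∈ A, ∑ z' ∈ Finset.univ.filter (fun z' => ¬ dist z z' ≤ δ), γ (z, z') :=
          Finset.sum_add_distrib
      _ ≤ (∑ z' ∈ B, Q z') + δ := add_le_add hnear hfar2
  · -- backward: Strassen's construction
    intro H
    obtain ⟨γ, hfeas, hmax⟩ := StrassenAux.exists_max P Q δ hP.1 hQ.1
    have hcut := StrassenAux.cut_bound P Q δ γ hfeas hmax H
    obtain ⟨hpos, hrow, hcol, hsupp⟩ := hfeas
    set r : Z → ℝ := fun z => P z - StrassenAux.rowsum γ z with hr
    set s : Z → ℝ := fun z' => Q z' - StrassenAux.colsum γ z' with hs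
    set t : ℝ := ∑ z, r z with ht
    have ht_eq : t = ∑ z, P z - StrassenAux.mass γ := by
      rw [ht]
      simp only [hr]
      rw [Finset.sum_sub_distrib, StrassenAux.sum_rowsum]
    have hs_sum : ∑ z', s z' = t := by
      simp only [hs]
      rw [Finset.sum_sub_distrib, StrassenAux.sum_colsum, hQ.2, ht_eq, hP.2]
    have hr0 : ∀ z, 0 ≤ r z := fun z => by simp only [hr]; linarith [hrow z]
    have hs0 : ∀ z', 0 ≤ s z' := fun z' => by simp only [hs]; linarith [hcol z']
    have ht0 : 0 ≤ t := Finset.sum_nonneg fun z _ => hr0 z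
    have htδ : t ≤ δ := by rw [ht_eq]; exact hcut
    have hr_zero : t = 0 → ∀ z, r z = 0 := by
      intro h z
      exact (Finset.sum_eq_zero_iff_of_nonneg (fun z _ => hr0 z)).mp (ht ▸ h) z
        (Finset.mem_univ z)
    have hs_zero : t = 0 → ∀ z', s z' = 0 := by
      intro h z'
      refine (Finset.sum_eq_zero_iff_of_nonneg (fun z _ => hs0 z)).mp ?_ z' (Finset.mem_univ z')
      rw [hs_sum, h]
    have hrt : ∀ z, r z * t / t = r z := by
      intro z
      rcases eq_or_ne t 0 with h | h
      · simp [hr_zero h z]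
      · rw [mul_div_assoc, div_self h, mul_one]
    have hst : ∀ z', t * s z' / t = s z' := by
      intro z'
      rcases eq_or_ne t 0 with h | h
      · simp [hs_zero h z']
      · rw [mul_comm, mul_div_assoc, div_self h, mul_one]
    refine ⟨fun w => γ w + r w.1 * s w.2 / t, ⟨?_, ?_, ?_⟩, ?_⟩
    · intro w
      have h1 : 0 ≤ r w.1 * s w.2 / t := div_nonneg (mul_nonneg (hr0 w.1) (hs0 w.2)) ht0
      have := hpos w
      linarith
    · intro z
      have e : ∑ z', (γ (z, z') + r z * s z' / t)
          = StrassenAux.rowsum γ z + r z * t / t := by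
        rw [Finset.sum_add_distrib]
        congr 1
        calc ∑ z', r z * s z' / t = (∑ z', r z * s z') / t := by rw [Finset.sum_div]
          _ = (r z * ∑ z', s z') / t := by rw [Finset.mul_sum]
          _ = r z * t / t := by rw [hs_sum]
      rw [e, hrt]
      simp only [hr]
      ring
    · intro z'
      have e : ∑ z, (γ (z, z') + r z * s z' / t)
          = StrassenAux.colsum γ z' + t * s z' / t := by
        rw [Finset.sum_add_distrib]
        congr 1
        calc ∑ z, r z * s z' / t = (∑ z, r z * s z') / t := by rw [Finset.sum_div]
          _ = ((∑ z, r z) * s z') / t := by rw [Finset.sum_mul]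
          _ = t * s z' / t := by rw [← ht]
      rw [e, hst]
      simp only [hs]
      ring
    · rw [indicator_sum]
      have e1 : ∀ w ∈ Finset.univ.filter (fun w : Z × Z => δ < dist w.1 w.2),
          γ w + r w.1 * s w.2 / t = r w.1 * s w.2 / t := by
        intro w hw
        rw [Finset.mem_filter] at hw
        rw [hsupp w hw.2, zero_add]
      calc ∑ w ∈ Finset.univ.filter (fun w : Z × Z => δ < dist w.1 w.2),
            (γ w + r w.1 * s w.2 / t)
          = ∑ w ∈ Finset.univ.filter (fun w : Z × Z => δ < dist w.1 w.2),
            r w.1 * s w.2 / t := Finset.sum_congr rfl e1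
        _ ≤ ∑ w : Z × Z, r w.1 * s w.2 / t := by
            refine Finset.sum_le_sum_of_subset_of_nonneg (Finset.subset_univ _) ?_
            intro w _ _; exact div_nonneg (mul_nonneg (hr0 w.1) (hs0 w.2)) ht0
        _ = t * t / t := by
            rw [← Finset.sum_div, Fintype.sum_prod_type]
            congr 1
            calc ∑ z, ∑ z', r z * s z' = ∑ z, r z * t := by
                  refine Finset.sum_congr rfl fun z _ => ?_
                  rw [← Finset.mul_sum, hs_sum]
              _ = t * t := by rw [← Finset.sum_mul, ← ht, mul_comm]
        _ ≤ δ := by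
            rcases eq_or_ne t 0 with h | h
            · rw [h]; simpa using hδ.le
            · rw [mul_comm, mul_div_assoc, div_self h, mul_one]; exact htδ
end

section
/- Interchange of evasion and worst-case: for a finite set Z ⊆ ℝ^d, a compact N ∋ 0, and α ≥ sup ℓ such that g = −log(α−ℓ) : Z → ℝ is bounded, we have sup{ E_{D}[−log(α−ℓ(Z))] : LP_N(D',D) ≤ 0 } = E_{D'}[ −log(α − ℓ^N(Z)) ], where ℓ^N(z) := max{ℓ(z+δ) : δ∈N, z+δ∈Z}; equivalently, inf{ E_D[log(α−ℓ(Z))] : LP_N(D',D) ≤ 0 } = E_{D'}[log(α − ℓ^N(Z))]. -/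
open scoped Pointwise BigOperators

/-- interchange of evasion and the worst case under a monotone
transform: for `α > sup ℓ`,
`sup { E_D[−log(α − ℓ(Z))] : LP_N(D', D) ≤ 0 } = E_{D'}[−log(α − ℓ^N(Z))]`,
where `ℓ^N(z) = max{ℓ(z+δ) : δ ∈ N, z+δ ∈ Z}`. -/
theorem evasion_monotone_interchange {d : ℕ} (Z : Finset (Fin d → ℝ)) (hZ : Z.Nonempty)
    (N : Set (Fin d → ℝ)) (h0 : (0 : Fin d → ℝ) ∈ N) (hN : IsCompact N)
    (ℓ : ↥Z → ℝ) (D' : ↥Z → ℝ) (hD' : IsDist D')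
    (a : ℝ) (ha : (⨆ z : ↥Z, ℓ z) < a) :
    sSup {v | ∃ D : ↥Z → ℝ, IsDist D ∧ LPmetric N D' D ≤ 0 ∧
        v = expect D (fun z => -Real.log (a - ℓ z))}
      = expect D' (fun z => -Real.log (a - advLoss Z N ℓ z)) := by
  classical
  have hne : Nonempty ↥Z := ⟨⟨hZ.choose, hZ.choose_spec⟩⟩
  set g : ↥Z → ℝ := fun z => -Real.log (a - ℓ z) with hgdef
  set h : ↥Z → ℝ := fun z => -Real.log (a - advLoss Z N ℓ z) with hhdef
  -- basic bounds on ℓ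
  have hℓa : ∀ z : ↥Z, ℓ z < a := fun z =>
    lt_of_le_of_lt (le_ciSup (Set.Finite.bddAbove (Set.finite_range ℓ)) z) ha
  -- adversarial loss is attained and is an upper bound
  have hadv : ∀ z : ↥Z,
      (∃ w : ↥Z, ((w : Fin d → ℝ) - (z : Fin d → ℝ)) ∈ N ∧ advLoss Z N ℓ z = ℓ w) ∧
      ∀ w : ↥Z, ((w : Fin d → ℝ) - (z : Fin d → ℝ)) ∈ N → ℓ w ≤ advLoss Z N ℓ z := by
    intro z
    have hfin : ({v | ∃ z' : ↥Z, ((z' : Fin d → ℝ) - (z : Fin d → ℝ)) ∈ N ∧ v = ℓ z'}).Finite :=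
      (Set.finite_range ℓ).subset (by rintro v ⟨z', -, rfl⟩; exact ⟨z', rfl⟩)
    have hnem : ({v | ∃ z' : ↥Z, ((z' : Fin d → ℝ) - (z : Fin d → ℝ)) ∈ N ∧ v = ℓ z'}).Nonempty :=
      ⟨ℓ z, z, by simpa using h0, rfl⟩
    constructor
    · obtain ⟨w, hw, hv⟩ := hnem.csSup_mem hfin
      exact ⟨w, hw, hv⟩
    · intro w hw
      exact le_csSup hfin.bddAbove ⟨w, hw, rfl⟩
  choose T hTN hTval using fun z => (hadv z).1
  have hub : ∀ z w : ↥Z, ((w : Fin d → ℝ) - (z : Fin d → ℝ)) ∈ N →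
      ℓ w ≤ advLoss Z N ℓ z := fun z => (hadv z).2
  have hadva : ∀ z : ↥Z, advLoss Z N ℓ z < a := by
    intro z; rw [hTval z]; exact hℓa _
  -- monotone transform bound
  have hmono : ∀ z w : ↥Z, ((w : Fin d → ℝ) - (z : Fin d → ℝ)) ∈ N → g w ≤ h z := by
    intro z w hw
    have h1 : 0 < a - advLoss Z N ℓ z := sub_pos.2 (hadva z)
    have h2 : a - advLoss Z N ℓ z ≤ a - ℓ w := by linarith [hub z w hw]
    exact neg_le_neg (Real.log_le_log h1 h2)
  have hgh : ∀ z : ↥Z, g (T z) = h z := by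
    intro z; simp only [hgdef, hhdef, hTval z]
  -- the pushforward distribution under T
  set D₀ : ↥Z → ℝ := fun z' => ∑ z, if T z = z' then D' z else 0 with hD₀def
  set γ₀ : ↥Z × ↥Z → ℝ := fun w => if T w.1 = w.2 then D' w.1 else 0 with hγ₀def
  have hγ₀c : IsCoupling γ₀ D' D₀ := by
    refine ⟨fun x => ?_, fun z => ?_, fun z' => rfl⟩
    · by_cases hx : T x.1 = x.2 <;> simp [hγ₀def, hx, hD'.1 x.1]
    · simp [hγ₀def, Finset.sum_ite_eq]
  have hD₀ : IsDist D₀ := by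
    constructor
    · intro z'
      refine Finset.sum_nonneg fun z _ => ?_
      by_cases hx : T z = z' <;> simp [hx, hD'.1 z]
    · rw [hD₀def]
      rw [Finset.sum_comm]
      simp only [Finset.sum_ite_eq, Finset.mem_univ, if_true]
      simpa using hD'.2
  have hLP₀ : LPmetric N D' D₀ ≤ 0 := by
    apply csInf_le
    · refine ⟨0, ?_⟩
      rintro x ⟨γ, hγ, rfl⟩
      refine Finset.sum_nonneg fun w _ => ?_
      exact Set.indicator_nonneg (fun w _ => hγ.1 w) w
    · refine ⟨γ₀, hγ₀c, ?_⟩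
      symm
      refine Finset.sum_eq_zero fun w _ => ?_
      rw [Set.indicator_apply]
      split_ifs with hw
      · by_cases hx : T w.1 = w.2
        · exact absurd (hx ▸ hTN w.1) hw
        · simp [hγ₀def, hx]
      · rfl
  have hexp₀ : expect D₀ g = expect D' h := by
    unfold expect
    rw [hD₀def]
    simp only [Finset.sum_mul]
    rw [Finset.sum_comm]
    refine Finset.sum_congr rfl fun z _ => ?_
    rw [← hgh z]
    simp only [ite_mul, zero_mul, Finset.sum_ite_eq, Finset.mem_univ, if_true]
  -- membership of the target in the feasible set
  have hmem : expect D' h ∈ {v | ∃ D : ↥Z → ℝ, IsDist D ∧ LPmetric N D' D ≤ 0 ∧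
      v = expect D g} := ⟨D₀, hD₀, hLP₀, hexp₀.symm⟩
  -- upper bound : every feasible value is at most the target
  have hUB : ∀ v ∈ {v | ∃ D : ↥Z → ℝ, IsDist D ∧ LPmetric N D' D ≤ 0 ∧
      v = expect D g}, v ≤ expect D' h := by
    rintro v ⟨D, hD, hLP, rfl⟩
    set C : ℝ := max ((⨆ z : ↥Z, g z) - (⨅ z : ↥Z, h z)) 0 with hCdef
    have hC0 : 0 ≤ C := le_max_right _ _
    have hgap : ∀ z z' : ↥Z, g z' - h z ≤ C := by
      intro z z'
      have h1 : g z' ≤ ⨆ z : ↥Z, g z :=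
        le_ciSup (Set.Finite.bddAbove (Set.finite_range g)) z'
      have h2 : (⨅ z : ↥Z, h z) ≤ h z :=
        ciInf_le (Set.Finite.bddBelow (Set.finite_range h)) z
      refine le_max_of_le_left ?_
      linarith
    refine le_of_forall_pos_le_add ?_
    intro ε hε
    -- the coupling constraint set is nonempty
    have hTne : {x | ∃ γ : ↥Z × ↥Z → ℝ, IsCoupling γ D' D ∧
        x = ∑ w : ↥Z × ↥Z,
          Set.indicator {w : ↥Z × ↥Z |
            ¬ ((w.2 : Fin d → ℝ) - (w.1 : Fin d → ℝ)) ∈ N} γ w}.Nonempty := by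
      refine ⟨_, fun w => D' w.1 * D w.2, ⟨fun w => mul_nonneg (hD'.1 w.1) (hD.1 w.2),
        fun z => ?_, fun z' => ?_⟩, rfl⟩
      · show ∑ z' : ↥Z, D' z * D z' = D' z
        rw [← Finset.mul_sum, hD.2, mul_one]
      · show ∑ z : ↥Z, D' z * D z' = D z'
        rw [← Finset.sum_mul, hD'.2, one_mul]
    have hδ : (0:ℝ) < ε / (C + 1) := div_pos hε (by linarith)
    obtain ⟨x, ⟨γ, hγ, rfl⟩, hxδ⟩ :=
      exists_lt_of_csInf_lt hTne (lt_of_le_of_lt hLP hδ)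
    -- rewrite the expectation through the coupling
    have hrw : expect D g = ∑ w : ↥Z × ↥Z, γ w * g w.2 := by
      unfold expect
      rw [Fintype.sum_prod_type_right]
      refine Finset.sum_congr rfl fun z' _ => ?_
      rw [← hγ.2.2 z', Finset.sum_mul]
    have hrw2 : expect D' h = ∑ w : ↥Z × ↥Z, γ w * h w.1 := by
      unfold expect
      rw [Fintype.sum_prod_type]
      refine Finset.sum_congr rfl fun z _ => ?_
      rw [← hγ.2.1 z, Finset.sum_mul]
    have hterm : ∀ w : ↥Z × ↥Z, γ w * g w.2 ≤ γ w * h w.1 +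
        Set.indicator {w : ↥Z × ↥Z |
          ¬ ((w.2 : Fin d → ℝ) - (w.1 : Fin d → ℝ)) ∈ N} γ w * C := by
      intro w
      rw [Set.indicator_apply]
      split_ifs with hw
      · have := hgap w.1 w.2
        nlinarith [hγ.1 w]
      · simp only [Set.mem_setOf_eq, not_not] at hw
        have := hmono w.1 w.2 hw
        nlinarith [hγ.1 w]
    calc expect D g = ∑ w : ↥Z × ↥Z, γ w * g w.2 := hrw
      _ ≤ ∑ w : ↥Z × ↥Z, (γ w * h w.1 +
            Set.indicator {w : ↥Z × ↥Z |
              ¬ ((w.2 : Fin d → ℝ) - (w.1 : Fin d → ℝ)) ∈ N} γ w * C) :=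
          Finset.sum_le_sum fun w _ => hterm w
      _ = expect D' h + (∑ w : ↥Z × ↥Z,
            Set.indicator {w : ↥Z × ↥Z |
              ¬ ((w.2 : Fin d → ℝ) - (w.1 : Fin d → ℝ)) ∈ N} γ w) * C := by
          rw [Finset.sum_add_distrib, hrw2, Finset.sum_mul]
      _ ≤ expect D' h + ε := by
          have hxC : (∑ w : ↥Z × ↥Z,
              Set.indicator {w : ↥Z × ↥Z |
                ¬ ((w.2 : Fin d → ℝ) - (w.1 : Fin d → ℝ)) ∈ N} γ w) * C
              ≤ (ε / (C + 1)) * C := by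
            exact mul_le_mul_of_nonneg_right (le_of_lt hxδ) hC0
          have : (ε / (C + 1)) * C ≤ ε := by
            rw [div_mul_eq_mul_div, div_le_iff₀ (by linarith : (0:ℝ) < C + 1)]
            nlinarith
          linarith
  exact le_antisymm (csSup_le ⟨_, hmem⟩ hUB) (le_csSup ⟨_, hUB⟩ hmem)
end

section
/- Commutation of LP and KL ambiguity sets at the level of support functions: let Z be a finite set, ℓ : Z → ℝ bounded, 0 ∈ N, r > 0. Then sup{ E_{D''}[ℓ] : ∃D with KL(D',D) ≤ r, LP_N(D,D'') ≤ 0 } = sup{ E_{D''}[ℓ] : ∃D with LP_N(D',D) ≤ 0, KL(D,D'') ≤ r }. That is, applying KL robustness first and then evasion, or evasion first and then KL robustness, yields the same worst-case expected loss. -/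
open scoped Pointwise BigOperators

section Helpers
variable {α : Type*} [Fintype α]

lemma ereal_coe_sum (s : Finset α) (f : α → ℝ) :
    ((∑ z ∈ s, f z : ℝ) : EReal) = ∑ z ∈ s, (f z : EReal) := by
  induction s using Finset.cons_induction with
  | empty => simp
  | cons a s ha ih => rw [Finset.sum_cons, Finset.sum_cons, EReal.coe_add, ih]

lemma ereal_sum_ne_bot (s : Finset α) (f : α → EReal) (hbot : ∀ i ∈ s, f i ≠ ⊥) :
    ∑ i ∈ s, f i ≠ ⊥ := by
  induction s using Finset.cons_induction with
  | empty => simp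
  | cons a s ha ih =>
    rw [Finset.sum_cons]
    intro h
    rcases EReal.add_eq_bot_iff.mp h with h' | h'
    · exact hbot a (Finset.mem_cons_self a s) h'
    · exact ih (fun i hi => hbot i (Finset.mem_cons_of_mem hi)) h'

lemma ereal_sum_eq_top (s : Finset α) (f : α → EReal)
    (hbot : ∀ i ∈ s, f i ≠ ⊥) (htop : ∃ i ∈ s, f i = ⊤) :
    ∑ i ∈ s, f i = ⊤ := by
  induction s using Finset.cons_induction with
  | empty => simp at htop
  | cons a s ha ih =>
    rw [Finset.sum_cons]
    obtain ⟨i, hi, hfi⟩ := htop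
    rcases Finset.mem_cons.mp hi with rfl | hi'
    · rw [hfi]
      exact EReal.top_add_of_ne_bot
        (ereal_sum_ne_bot s f fun j hj => hbot j (Finset.mem_cons_of_mem hj))
    · rw [ih (fun j hj => hbot j (Finset.mem_cons_of_mem hj)) ⟨i, hi', hfi⟩]
      exact EReal.add_top_of_ne_bot (hbot a (Finset.mem_cons_self a s))

lemma KLdiv_eq_top {p q : α → ℝ} (h : ∃ z, p z ≠ 0 ∧ q z = 0) : KLdiv p q = ⊤ := by
  obtain ⟨z, hp, hq⟩ := h
  refine ereal_sum_eq_top _ _ (fun i _ => ?_) ⟨z, Finset.mem_univ z, by simp [hp, hq]⟩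
  split_ifs
  · exact EReal.zero_ne_bot
  · exact top_ne_bot
  · exact EReal.coe_ne_bot _

lemma KLdiv_ac {p q : α → ℝ} (h : KLdiv p q ≠ ⊤) : ∀ z, q z = 0 → p z = 0 := by
  intro z hq
  by_contra hp
  exact h (KLdiv_eq_top ⟨z, hp, hq⟩)

lemma KLdiv_eq_coe {p q : α → ℝ} (hac : ∀ z, q z = 0 → p z = 0) :
    KLdiv p q
      = ((∑ z, if p z = 0 then 0 else p z * Real.log (p z / q z) : ℝ) : EReal) := by
  rw [KLdiv, ereal_coe_sum]
  refine Finset.sum_congr rfl fun z _ => ?_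
  by_cases hp : p z = 0
  · simp [hp]
  · have hq : q z ≠ 0 := fun h => hp (hac z h)
    simp [hp, hq]

lemma log_sum_ineq (s : Finset α) (a b : α → ℝ) (ha : ∀ i ∈ s, 0 ≤ a i)
    (hb : ∀ i ∈ s, 0 ≤ b i) (hab : ∀ i ∈ s, b i = 0 → a i = 0) :
    (∑ i ∈ s, a i) * Real.log ((∑ i ∈ s, a i) / (∑ i ∈ s, b i)) ≤
      ∑ i ∈ s, a i * Real.log (a i / b i) := by
  set A := ∑ i ∈ s, a i with hA
  set B := ∑ i ∈ s, b i with hB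
  rcases eq_or_lt_of_le (Finset.sum_nonneg ha) with hA0 | hA0
  · have hz : ∀ i ∈ s, a i = 0 :=
      fun i hi => (Finset.sum_eq_zero_iff_of_nonneg ha).mp hA0.symm i hi
    have hA' : A = 0 := hA0.symm
    have hRHS : ∑ i ∈ s, a i * Real.log (a i / b i) = 0 :=
      Finset.sum_eq_zero fun i hi => by rw [hz i hi, zero_mul]
    rw [hA', hRHS, zero_mul]
  · have hB0 : 0 < B := by
      rcases eq_or_lt_of_le (Finset.sum_nonneg hb) with h0 | h0
      · exfalso
        have hz : ∀ i ∈ s, b i = 0 :=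
          fun i hi => (Finset.sum_eq_zero_iff_of_nonneg hb).mp h0.symm i hi
        have : A = 0 := Finset.sum_eq_zero fun i hi => hab i hi (hz i hi)
        exact absurd this (ne_of_gt hA0)
      · exact h0
    have key : ∀ i ∈ s, a i * Real.log (A / B) + (a i - b i * (A / B))
        ≤ a i * Real.log (a i / b i) := by
      intro i hi
      rcases eq_or_lt_of_le (ha i hi) with h0 | h0
      · rw [← h0]
        have : (0:ℝ) - b i * (A/B) ≤ 0 := by
          have : 0 ≤ b i * (A/B) := mul_nonneg (hb i hi) (div_nonneg hA0.le hB0.le)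
          linarith
        simpa using this
      · have hbi : 0 < b i := by
          rcases eq_or_lt_of_le (hb i hi) with h | h
          · exact absurd (hab i hi h.symm) (ne_of_gt h0)
          · exact h
        have ht : 0 < (a i / b i) * (B / A) :=
          mul_pos (div_pos h0 hbi) (div_pos hB0 hA0)
        have hlog : 1 - ((a i / b i) * (B / A))⁻¹ ≤ Real.log ((a i / b i) * (B / A)) := by
          have := Real.log_le_sub_one_of_pos (inv_pos.mpr ht)
          rw [Real.log_inv] at this
          linarith
        have hexp : Real.log ((a i / b i) * (B / A))
            = Real.log (a i / b i) - Real.log (A / B) := by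
          rw [Real.log_mul (ne_of_gt (div_pos h0 hbi)) (ne_of_gt (div_pos hB0 hA0)),
            Real.log_div (ne_of_gt hB0) (ne_of_gt hA0),
            Real.log_div (ne_of_gt hA0) (ne_of_gt hB0)]
          ring
        have hinv : ((a i / b i) * (B / A))⁻¹ = (b i * (A / B)) / a i := by
          field_simp
        have h2 : a i * (1 - (b i * (A / B)) / a i)
            ≤ a i * (Real.log (a i / b i) - Real.log (A / B)) := by
          rw [← hexp]
          refine mul_le_mul_of_nonneg_left ?_ h0.le
          rw [← hinv]; exact hlog
        have h3 : a i * (1 - (b i * (A / B)) / a i) = a i - b i * (A / B) := by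
          field_simp
        nlinarith [h2, h3]
    calc A * Real.log (A / B)
        = ∑ i ∈ s, (a i * Real.log (A / B) + (a i - b i * (A / B))) := by
          rw [Finset.sum_add_distrib, ← Finset.sum_mul, Finset.sum_sub_distrib,
            ← Finset.sum_mul, ← hA, ← hB]
          have : B * (A / B) = A := by field_simp
          rw [this]; ring
      _ ≤ ∑ i ∈ s, a i * Real.log (a i / b i) := Finset.sum_le_sum key
end Helpers

lemma kl_data_processing {α : Type*} [Fintype α] (P Q : α → ℝ) (K : α → α → ℝ)
    (hP0 : ∀ z, 0 ≤ P z) (hQ0 : ∀ z, 0 ≤ Q z)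
    (hK0 : ∀ z z', 0 ≤ K z z') (hK1 : ∀ z, ∑ z', K z z' = 1)
    (hPQ : KLdiv P Q ≠ ⊤) :
    KLdiv (fun z' => ∑ z, P z * K z z') (fun z' => ∑ z, Q z * K z z') ≤ KLdiv P Q := by
  have hac : ∀ z, Q z = 0 → P z = 0 := KLdiv_ac hPQ
  set P' : α → ℝ := fun z' => ∑ z, P z * K z z' with hP'def
  set Q' : α → ℝ := fun z' => ∑ z, Q z * K z z' with hQ'def
  have hac' : ∀ z', Q' z' = 0 → P' z' = 0 := by
    intro z' hq
    have hterm : ∀ z ∈ Finset.univ, Q z * K z z' = 0 :=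
      (Finset.sum_eq_zero_iff_of_nonneg
        (fun z _ => mul_nonneg (hQ0 z) (hK0 z z'))).mp hq
    refine Finset.sum_eq_zero fun z _ => ?_
    by_cases hp : P z = 0
    · rw [hp, zero_mul]
    · have hQz : Q z ≠ 0 := fun h => hp (hac z h)
      have hK : K z z' = 0 := by
        rcases mul_eq_zero.mp (hterm z (Finset.mem_univ z)) with h | h
        · exact absurd h hQz
        · exact h
      rw [hK, mul_zero]
  rw [KLdiv_eq_coe hac, KLdiv_eq_coe hac']
  rw [EReal.coe_le_coe_iff]
  have key : ∀ z', (if P' z' = 0 then (0:ℝ) else P' z' * Real.log (P' z' / Q' z'))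
      ≤ ∑ z, (if P z = 0 then (0:ℝ) else (P z * Real.log (P z / Q z)) * K z z') := by
    intro z'
    by_cases hp' : P' z' = 0
    · rw [if_pos hp']
      have hterm : ∀ z ∈ Finset.univ, P z * K z z' = 0 :=
        (Finset.sum_eq_zero_iff_of_nonneg
          (fun z _ => mul_nonneg (hP0 z) (hK0 z z'))).mp hp'
      have : ∑ z, (if P z = 0 then (0:ℝ) else (P z * Real.log (P z / Q z)) * K z z') = 0 := by
        refine Finset.sum_eq_zero fun z _ => ?_
        by_cases hp : P z = 0
        · rw [if_pos hp]
        · have hK : K z z' = 0 := by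
            rcases mul_eq_zero.mp (hterm z (Finset.mem_univ z)) with h | h
            · exact absurd h hp
            · exact h
          rw [if_neg hp, hK, mul_zero]
      rw [this]
    · rw [if_neg hp']
      have hls := log_sum_ineq (Finset.univ) (fun z => P z * K z z') (fun z => Q z * K z z')
        (fun z _ => mul_nonneg (hP0 z) (hK0 z z'))
        (fun z _ => mul_nonneg (hQ0 z) (hK0 z z'))
        (fun z _ hb => by
          rcases mul_eq_zero.mp hb with h | h
          · rw [hac z h, zero_mul]
          · rw [h, mul_zero])
      have heq : ∑ z, (P z * K z z') * Real.log ((P z * K z z') / (Q z * K z z'))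
          = ∑ z, (if P z = 0 then (0:ℝ) else (P z * Real.log (P z / Q z)) * K z z') := by
        refine Finset.sum_congr rfl fun z _ => ?_
        by_cases hp : P z = 0
        · rw [if_pos hp, hp, zero_mul, zero_mul]
        · rw [if_neg hp]
          by_cases hk : K z z' = 0
          · simp [hk]
          · rw [mul_div_mul_right _ _ hk]
            ring
      calc P' z' * Real.log (P' z' / Q' z')
          = (∑ z, P z * K z z') * Real.log ((∑ z, P z * K z z') / (∑ z, Q z * K z z')) := rfl
        _ ≤ ∑ z, (P z * K z z') * Real.log ((P z * K z z') / (Q z * K z z')) := hls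
        _ = _ := heq
  calc ∑ z', (if P' z' = 0 then (0:ℝ) else P' z' * Real.log (P' z' / Q' z'))
      ≤ ∑ z', ∑ z, (if P z = 0 then (0:ℝ) else (P z * Real.log (P z / Q z)) * K z z') :=
        Finset.sum_le_sum fun z' _ => key z'
    _ = ∑ z, ∑ z', (if P z = 0 then (0:ℝ) else (P z * Real.log (P z / Q z)) * K z z') :=
        Finset.sum_comm
    _ = ∑ z, (if P z = 0 then (0:ℝ) else P z * Real.log (P z / Q z)) := by
        refine Finset.sum_congr rfl fun z _ => ?_
        by_cases hp : P z = 0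
        · simp [hp]
        · simp only [if_neg hp]
          rw [← Finset.mul_sum, hK1 z, mul_one]

section Chan
variable {α : Type*} [Fintype α] [DecidableEq α]

lemma IsCoupling.flip {γ : α × α → ℝ} {p q : α → ℝ} (h : IsCoupling γ p q) :
    IsCoupling (fun w => γ (w.2, w.1)) q p :=
  ⟨fun w => h.1 _, fun z => h.2.2 z, fun z' => h.2.1 z'⟩

noncomputable def chan (p : α → ℝ) (γ : α × α → ℝ) (z z' : α) : ℝ :=
  if p z = 0 then (if z' = z then 1 else 0) else γ (z, z') / p z

lemma chan_nonneg {p q : α → ℝ} {γ : α × α → ℝ} (hp0 : ∀ z, 0 ≤ p z)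
    (hγ : IsCoupling γ p q) (z z' : α) : 0 ≤ chan p γ z z' := by
  rw [chan]; split_ifs with h1 h2
  · exact zero_le_one
  · exact le_refl 0
  · exact div_nonneg (hγ.1 _) (hp0 z)

lemma chan_rowsum {p q : α → ℝ} {γ : α × α → ℝ} (hγ : IsCoupling γ p q) (z : α) :
    ∑ z', chan p γ z z' = 1 := by
  by_cases h : p z = 0
  · simp only [chan, if_pos h]
    simp
  · simp only [chan, if_neg h]
    rw [← Finset.sum_div, hγ.2.1 z, div_self h]

lemma chan_push_base {p q : α → ℝ} {γ : α × α → ℝ} (hγ : IsCoupling γ p q) (z' : α) :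
    ∑ z, p z * chan p γ z z' = q z' := by
  rw [← hγ.2.2 z']
  refine Finset.sum_congr rfl fun z _ => ?_
  by_cases hp : p z = 0
  · have hγ0 : γ (z, z') = 0 := by
      have hs := hγ.2.1 z
      rw [hp] at hs
      exact (Finset.sum_eq_zero_iff_of_nonneg (fun i _ => hγ.1 _)).mp hs z' (Finset.mem_univ _)
    rw [hp, zero_mul, hγ0]
  · rw [chan, if_neg hp, mul_comm, div_mul_cancel₀ _ hp]

lemma push_isDist {p q P : α → ℝ} {γ : α × α → ℝ} (hp0 : ∀ z, 0 ≤ p z)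
    (hγ : IsCoupling γ p q) (hP : IsDist P) :
    IsDist (fun z' => ∑ z, P z * chan p γ z z') := by
  constructor
  · exact fun z' => Finset.sum_nonneg fun z _ => mul_nonneg (hP.1 z) (chan_nonneg hp0 hγ z z')
  · rw [Finset.sum_comm]
    calc ∑ z, ∑ z', P z * chan p γ z z' = ∑ z, P z := by
          refine Finset.sum_congr rfl fun z _ => ?_
          rw [← Finset.mul_sum, chan_rowsum hγ z, mul_one]
      _ = 1 := hP.2

lemma push_isCoupling {p q P : α → ℝ} {γ : α × α → ℝ} (hp0 : ∀ z, 0 ≤ p z)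
    (hγ : IsCoupling γ p q) (hP : IsDist P) :
    IsCoupling (fun w : α × α => P w.1 * chan p γ w.1 w.2) P
      (fun z' => ∑ z, P z * chan p γ z z') := by
  refine ⟨fun w => mul_nonneg (hP.1 _) (chan_nonneg hp0 hγ _ _), fun z => ?_, fun z' => rfl⟩
  dsimp only
  rw [← Finset.mul_sum, chan_rowsum hγ z, mul_one]

lemma push_support {p P : α → ℝ} {γ : α × α → ℝ} (w : α × α)
    (h : P w.1 * chan p γ w.1 w.2 ≠ 0) : w.2 = w.1 ∨ γ w ≠ 0 := by
  have hch : chan p γ w.1 w.2 ≠ 0 := fun h0 => h (by rw [h0, mul_zero])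
  by_cases h1 : p w.1 = 0
  · by_cases h2 : w.2 = w.1
    · exact Or.inl h2
    · exfalso; apply hch; rw [chan, if_pos h1, if_neg h2]
  · refine Or.inr fun h2 => hch ?_
    rw [chan, if_neg h1, show γ (w.1, w.2) = γ w from rfl, h2, zero_div]

end Chan

lemma LPmetric_nonpos {d : ℕ} {Z : Finset (Fin d → ℝ)} {N : Set (Fin d → ℝ)}
    {p q : ↥Z → ℝ} (γ : ↥Z × ↥Z → ℝ) (hγ : IsCoupling γ p q)
    (hsupp : ∀ w, γ w ≠ 0 → ((w.2 : Fin d → ℝ) - (w.1 : Fin d → ℝ)) ∈ N) :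
    LPmetric N p q ≤ 0 := by
  apply csInf_le
  · refine ⟨0, ?_⟩
    rintro x ⟨γ', hγ', rfl⟩
    exact Finset.sum_nonneg fun w _ => Set.indicator_nonneg (fun w _ => hγ'.1 w) w
  · refine ⟨γ, hγ, ?_⟩
    symm
    refine Finset.sum_eq_zero fun w _ => ?_
    by_cases hw : w ∈ {w : ↥Z × ↥Z | ¬ ((w.2 : Fin d → ℝ) - (w.1 : Fin d → ℝ)) ∈ N}
    · rw [Set.indicator_of_mem hw]
      by_contra h
      exact hw (hsupp w h)
    · rw [Set.indicator_of_notMem hw]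

set_option maxHeartbeats 1000000 in
lemma exists_good_coupling {d : ℕ} {Z : Finset (Fin d → ℝ)} {N : Set (Fin d → ℝ)}
    {p q : ↥Z → ℝ} (hp : IsDist p) (hq : IsDist q) (h : LPmetric N p q ≤ 0) :
    ∃ γ, IsCoupling γ p q ∧
      ∀ w, ¬ ((w.2 : Fin d → ℝ) - (w.1 : Fin d → ℝ)) ∈ N → γ w = 0 := by
  classical
  set B : Set (↥Z × ↥Z) := {w | ¬ ((w.2 : Fin d → ℝ) - (w.1 : Fin d → ℝ)) ∈ N} with hB
  set f : (↥Z × ↥Z → ℝ) → ℝ := fun γ => ∑ w, Set.indicator B γ w with hf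
  set C : Set (↥Z × ↥Z → ℝ) := {γ | IsCoupling γ p q} with hC
  have hfc : Continuous f := by
    refine continuous_finset_sum _ fun w _ => ?_
    by_cases hw : w ∈ B
    · simpa only [Set.indicator_of_mem hw] using continuous_apply w
    · simpa only [Set.indicator_of_notMem hw] using continuous_const
  have hCne : C.Nonempty := by
    refine ⟨fun w => p w.1 * q w.2, fun w => mul_nonneg (hp.1 _) (hq.1 _), fun z => ?_, fun z' => ?_⟩
    · dsimp only; rw [← Finset.mul_sum, hq.2, mul_one]
    · dsimp only; rw [← Finset.sum_mul, hp.2, one_mul]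
  have hCclosed : IsClosed C := by
    have hCeq : C = (⋂ x, {γ : ↥Z × ↥Z → ℝ | 0 ≤ γ x}) ∩
        ((⋂ z, {γ : ↥Z × ↥Z → ℝ | ∑ z', γ (z, z') = p z}) ∩
         (⋂ z', {γ : ↥Z × ↥Z → ℝ | ∑ z, γ (z, z') = q z'})) := by
      ext γ
      simp only [hC, Set.mem_inter_iff, Set.mem_iInter, Set.mem_setOf_eq, IsCoupling]
    rw [hCeq]
    exact (isClosed_iInter fun x => isClosed_le continuous_const (continuous_apply x)).inter
      ((isClosed_iInter fun z => isClosed_eq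
          (continuous_finset_sum Finset.univ fun z' _ =>
            (continuous_apply (z, z') : Continuous fun γ : ↥Z × ↥Z → ℝ => γ (z, z')))
          continuous_const).inter
       (isClosed_iInter fun z' => isClosed_eq
          (continuous_finset_sum Finset.univ fun z _ =>
            (continuous_apply (z, z') : Continuous fun γ : ↥Z × ↥Z → ℝ => γ (z, z')))
          continuous_const))
  have hsub : C ⊆ Set.univ.pi fun _ : ↥Z × ↥Z => Set.Icc (0:ℝ) 1 := by
    intro γ hγ w _
    refine ⟨hγ.1 w, ?_⟩
    have h1 : γ w ≤ ∑ z', γ (w.1, z') :=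
      Finset.single_le_sum (f := fun z' => γ (w.1, z')) (fun z' _ => hγ.1 _)
        (Finset.mem_univ w.2)
    have h2 : p w.1 ≤ 1 := by
      rw [← hp.2]
      exact Finset.single_le_sum (fun z _ => hp.1 z) (Finset.mem_univ w.1)
    calc γ w ≤ p w.1 := by rw [← hγ.2.1 w.1]; exact h1
      _ ≤ 1 := h2
  have hCcomp : IsCompact C :=
    (isCompact_univ_pi fun _ => isCompact_Icc).of_isClosed_subset hCclosed hsub
  have himg : {x | ∃ γ : ↥Z × ↥Z → ℝ, IsCoupling γ p q ∧ x = f γ} = f '' C := by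
    ext x
    constructor
    · rintro ⟨γ, h1, h2⟩; exact ⟨γ, h1, h2.symm⟩
    · rintro ⟨γ, h1, h2⟩; exact ⟨γ, h1, h2.symm⟩
  have h' : sInf (f '' C) ≤ 0 := by
    rw [← himg]
    exact h
  have hmem : sInf (f '' C) ∈ f '' C :=
    (hCcomp.image hfc).sInf_mem (hCne.image f)
  obtain ⟨γ, hγC, hγval⟩ := hmem
  have hnn : 0 ≤ f γ :=
    Finset.sum_nonneg fun w _ => Set.indicator_nonneg (fun w _ => hγC.1 w) w
  have h0 : f γ = 0 := le_antisymm (by rw [hγval]; exact h') hnn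
  refine ⟨γ, hγC, fun w hw => ?_⟩
  have hterm := (Finset.sum_eq_zero_iff_of_nonneg
    (fun w _ => Set.indicator_nonneg (fun w _ => hγC.1 w) w)).mp h0 w (Finset.mem_univ w)
  rwa [Set.indicator_of_mem (show w ∈ B from hw)] at hterm

/-- commutation of the LP and KL ambiguity sets at the level of support
functions: for a bounded loss `ℓ` on a finite `Z ⊆ ℝ^d`, `0 ∈ N` compact, `r > 0`,
`sup { E_{D''}[ℓ] : ∃D, KL(D',D) ≤ r, LP_N(D,D'') ≤ 0 }
  = sup { E_{D''}[ℓ] : ∃D, LP_N(D',D) ≤ 0, KL(D,D'') ≤ r }`. -/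
theorem kl_lp_commute_support_functions {d : ℕ} (Z : Finset (Fin d → ℝ))
    (N : Set (Fin d → ℝ)) (h0 : (0 : Fin d → ℝ) ∈ N) (hN : IsCompact N)
    (r : ℝ) (hr : 0 < r) (ℓ : ↥Z → ℝ) (D' : ↥Z → ℝ) (hD' : IsDist D') :
    sSup {v | ∃ D'' : ↥Z → ℝ, IsDist D'' ∧
        (∃ D : ↥Z → ℝ, IsDist D ∧ KLdiv D' D ≤ (r : EReal) ∧ LPmetric N D D'' ≤ 0) ∧
        v = expect D'' ℓ}
      = sSup {v | ∃ D'' : ↥Z → ℝ, IsDist D'' ∧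
          (∃ D : ↥Z → ℝ, IsDist D ∧ LPmetric N D' D ≤ 0 ∧ KLdiv D D'' ≤ (r : EReal)) ∧
          v = expect D'' ℓ} := by
  classical
  have hset : {v | ∃ D'' : ↥Z → ℝ, IsDist D'' ∧
        (∃ D : ↥Z → ℝ, IsDist D ∧ KLdiv D' D ≤ (r : EReal) ∧ LPmetric N D D'' ≤ 0) ∧
        v = expect D'' ℓ}
      = {v | ∃ D'' : ↥Z → ℝ, IsDist D'' ∧
          (∃ D : ↥Z → ℝ, IsDist D ∧ LPmetric N D' D ≤ 0 ∧ KLdiv D D'' ≤ (r : EReal)) ∧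
          v = expect D'' ℓ} := by
    ext v
    simp only [Set.mem_setOf_eq]
    constructor
    · rintro ⟨D'', hD'', ⟨D, hD, hKL, hLP⟩, rfl⟩
      obtain ⟨γ, hγ, hγ0⟩ := exists_good_coupling hD hD'' hLP
      have hsupp : ∀ w : ↥Z × ↥Z, γ w ≠ 0 →
          ((w.2 : Fin d → ℝ) - (w.1 : Fin d → ℝ)) ∈ N := by
        intro w hw
        by_contra hcon
        exact hw (hγ0 w hcon)
      refine ⟨D'', hD'', ⟨fun z' => ∑ z, D' z * chan D γ z z',
        push_isDist hD.1 hγ hD', ?_, ?_⟩, rfl⟩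
      · -- LPmetric N D' (push) ≤ 0
        refine LPmetric_nonpos (fun w : ↥Z × ↥Z => D' w.1 * chan D γ w.1 w.2)
          (push_isCoupling hD.1 hγ hD') ?_
        intro w hw
        rcases push_support w hw with h | h
        · rw [h, sub_self]; exact h0
        · exact hsupp w h
      · -- KLdiv (push) D'' ≤ r
        have hpush : (fun z' => ∑ z, D z * chan D γ z z') = D'' :=
          funext fun z' => chan_push_base hγ z'
        have hdp := kl_data_processing D' D (chan D γ) hD'.1 hD.1
          (fun z z' => chan_nonneg hD.1 hγ z z') (fun z => chan_rowsum hγ z)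
          (hKL.trans_lt (EReal.coe_lt_top r)).ne
        rw [hpush] at hdp
        exact hdp.trans hKL
    · rintro ⟨D'', hD'', ⟨Dt, hDt, hLP, hKL⟩, rfl⟩
      obtain ⟨γ, hγ, hγ0⟩ := exists_good_coupling hD' hDt hLP
      have hsupp : ∀ w : ↥Z × ↥Z, γ w ≠ 0 →
          ((w.2 : Fin d → ℝ) - (w.1 : Fin d → ℝ)) ∈ N := by
        intro w hw
        by_contra hcon
        exact hw (hγ0 w hcon)
      have hγf : IsCoupling (fun w : ↥Z × ↥Z => γ (w.2, w.1)) Dt D' := hγ.flip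
      refine ⟨D'', hD'', ⟨fun z => ∑ z'', D'' z'' * chan Dt (fun w : ↥Z × ↥Z => γ (w.2, w.1)) z'' z,
        push_isDist hDt.1 hγf hD'', ?_, ?_⟩, rfl⟩
      · -- KLdiv D' (push D'') ≤ r
        have hpush : (fun z => ∑ z'', Dt z'' * chan Dt (fun w : ↥Z × ↥Z => γ (w.2, w.1)) z'' z) = D' :=
          funext fun z => chan_push_base hγf z
        have hdp := kl_data_processing Dt D'' (chan Dt (fun w : ↥Z × ↥Z => γ (w.2, w.1))) hDt.1 hD''.1
          (fun z z' => chan_nonneg hDt.1 hγf z z') (fun z => chan_rowsum hγf z)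
          (hKL.trans_lt (EReal.coe_lt_top r)).ne
        rw [hpush] at hdp
        exact hdp.trans hKL
      · -- LPmetric N (push D'') D'' ≤ 0
        have hcoup : IsCoupling
            (fun w : ↥Z × ↥Z => D'' w.1 * chan Dt (fun w : ↥Z × ↥Z => γ (w.2, w.1)) w.1 w.2)
            D'' (fun z => ∑ z'', D'' z'' * chan Dt (fun w : ↥Z × ↥Z => γ (w.2, w.1)) z'' z) :=
          push_isCoupling hDt.1 hγf hD''
        refine LPmetric_nonpos
          (fun w : ↥Z × ↥Z => D'' w.2 * chan Dt (fun w : ↥Z × ↥Z => γ (w.2, w.1)) w.2 w.1)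
          hcoup.flip ?_
        intro w hw
        rcases push_support (p := Dt) ((w.2, w.1) : ↥Z × ↥Z) hw with h | h
        · have : w.1 = w.2 := h
          rw [this, sub_self]; exact h0
        · exact hsupp w h
  rw [hset]
end

section
/- Under the saddle-point assumption, the AT overfitting gap decomposes as G_AT(S_n, ℓ) = G_ERM(S_n^AT, ℓ) + G_SHIFT(S_n, ℓ), where G_SHIFT ≥ 0. In particular, the AT overfitting gap is at least the ERM overfitting gap under the worst-case adversary's data distribution: G_AT(S_n,ℓ) ≥ G_ERM(S_n^AT, ℓ). -/
open scoped Pointwise BigOperators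

open scoped Classical

/-- The adversarial-training objective
`max { E_q[ℓ(θ,Z)] : LP_N(p, q) ≤ 0 }` as a function of the model `θ`. -/
noncomputable def ATval {d : ℕ} {Θ : Type*} (Z : Finset (Fin d → ℝ))
    (N : Set (Fin d → ℝ)) (ℓ : Θ → ↥Z → ℝ) (p : ↥Z → ℝ) (θ : Θ) : ℝ :=
  sSup {v | ∃ q : ↥Z → ℝ, IsDist q ∧ LPmetric N p q ≤ 0 ∧ v = expect q (ℓ θ)}

section AuxLemmas

lemma AT_nonempty_of_isDist {α : Type*} [Fintype α] {p : α → ℝ} (hp : IsDist p) :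
    Nonempty α := by
  by_contra h
  rw [not_nonempty_iff] at h
  have h2 := hp.2
  simp [Finset.univ_eq_empty] at h2

lemma AT_sum_prodw {α : Type*} [Fintype α] (D : α → ℝ) (hD : ∑ z, D z = 1) (n : ℕ) :
    ∑ ω : Fin n → α, prodw D n ω = 1 := by
  unfold prodw
  rw [← Fintype.piFinset_univ,
    ← Finset.prod_univ_sum (fun _ : Fin n => (Finset.univ : Finset α)) (fun _ z => D z)]
  simp [hD]

lemma AT_expect_emp {α : Type*} [Fintype α] [DecidableEq α] {n : ℕ} (ω : Fin n → α)
    (f : α → ℝ) : expect (emp n ω) f = (∑ i, f (ω i)) / n := by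
  unfold expect emp
  rw [← Finset.sum_fiberwise Finset.univ ω (fun i => f (ω i)), Finset.sum_div]
  refine Finset.sum_congr rfl fun z _ => ?_
  have h : ∀ i ∈ Finset.univ.filter (fun i => ω i = z), f (ω i) = f z := by
    intro i hi
    rw [(Finset.mem_filter.1 hi).2]
  rw [Finset.sum_congr rfl h, Finset.sum_const, nsmul_eq_mul]
  ring

lemma AT_isDist_emp {α : Type*} [Fintype α] [DecidableEq α] {n : ℕ} (hn : 0 < n)
    (ω : Fin n → α) : IsDist (emp n ω) := by
  constructor
  · intro z
    unfold emp
    positivity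
  · have h := AT_expect_emp ω (fun _ => (1 : ℝ))
    simp only [expect, mul_one, Finset.sum_const, Finset.card_univ, Fintype.card_fin,
      nsmul_eq_mul] at h
    rw [h]
    field_simp

lemma AT_sum_prodw_expect {α : Type*} [Fintype α] [DecidableEq α] (D : α → ℝ)
    (hD : ∑ z, D z = 1) {n : ℕ} (hn : 0 < n) (f : α → ℝ) :
    ∑ ω : Fin n → α, prodw D n ω * expect (emp n ω) f = expect D f := by
  have key : ∀ i : Fin n, ∑ ω : Fin n → α, prodw D n ω * f (ω i) = expect D f := by
    intro i
    have h1 : ∀ ω : Fin n → α, prodw D n ω * f (ω i)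
        = ∏ j, (fun (j : Fin n) (z : α) => if j = i then D z * f z else D z) j (ω j) := by
      intro ω
      simp only
      unfold prodw
      rw [← Finset.mul_prod_erase Finset.univ (fun j => D (ω j)) (Finset.mem_univ i),
        ← Finset.mul_prod_erase Finset.univ
          (fun j => if j = i then D (ω j) * f (ω j) else D (ω j)) (Finset.mem_univ i)]
      rw [if_pos rfl,
        Finset.prod_congr rfl (fun j hj => if_neg (Finset.ne_of_mem_erase hj))]
      ring
    calc ∑ ω : Fin n → α, prodw D n ω * f (ω i)
        = ∑ ω ∈ Fintype.piFinset (fun _ : Fin n => (Finset.univ : Finset α)),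
            ∏ j, (fun (j : Fin n) (z : α) => if j = i then D z * f z else D z) j (ω j) := by
          rw [Fintype.piFinset_univ]
          exact Finset.sum_congr rfl fun ω _ => h1 ω
      _ = ∏ j : Fin n, ∑ z : α, (if j = i then D z * f z else D z) := by
          rw [Finset.prod_univ_sum]
      _ = expect D f := by
          rw [Finset.prod_eq_single i (fun j _ hj => by simp [if_neg hj, hD])
            (fun h => absurd (Finset.mem_univ i) h)]
          simp [expect]
  calc ∑ ω : Fin n → α, prodw D n ω * expect (emp n ω) f
      = ∑ ω : Fin n → α, (∑ i, prodw D n ω * f (ω i)) / n := by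
        refine Finset.sum_congr rfl fun ω _ => ?_
        rw [AT_expect_emp, ← Finset.mul_sum, mul_div_assoc]
    _ = (∑ i : Fin n, ∑ ω : Fin n → α, prodw D n ω * f (ω i)) / n := by
        rw [← Finset.sum_div, Finset.sum_comm]
    _ = (∑ _i : Fin n, expect D f) / n := by
        rw [Finset.sum_congr rfl fun i _ => key i]
    _ = expect D f := by
        rw [Finset.sum_const, Finset.card_univ, Fintype.card_fin, nsmul_eq_mul]
        field_simp

lemma AT_advLoss_spec {d : ℕ} (Z : Finset (Fin d → ℝ)) (N : Set (Fin d → ℝ))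
    (h0 : (0 : Fin d → ℝ) ∈ N) (f : ↥Z → ℝ) (z : ↥Z) :
    (∃ b : ↥Z, ((b : Fin d → ℝ) - (z : Fin d → ℝ)) ∈ N ∧ advLoss Z N f z = f b) ∧
    (∀ z' : ↥Z, ((z' : Fin d → ℝ) - (z : Fin d → ℝ)) ∈ N → f z' ≤ advLoss Z N f z) := by
  have hset : {v | ∃ z' : ↥Z, ((z' : Fin d → ℝ) - (z : Fin d → ℝ)) ∈ N ∧ v = f z'}
      = f '' {z' : ↥Z | ((z' : Fin d → ℝ) - (z : Fin d → ℝ)) ∈ N} := by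
    ext v
    constructor
    · rintro ⟨z', h, rfl⟩; exact ⟨z', h, rfl⟩
    · rintro ⟨z', h, rfl⟩; exact ⟨z', h, rfl⟩
  have hfin : Set.Finite {v | ∃ z' : ↥Z, ((z' : Fin d → ℝ) - (z : Fin d → ℝ)) ∈ N ∧ v = f z'} := by
    rw [hset]; exact Set.Finite.image f (Set.toFinite _)
  have hne : Set.Nonempty {v | ∃ z' : ↥Z, ((z' : Fin d → ℝ) - (z : Fin d → ℝ)) ∈ N ∧ v = f z'} :=
    ⟨f z, z, by rw [sub_self]; exact h0, rfl⟩
  constructor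
  · exact hne.csSup_mem hfin
  · intro z' h
    exact le_csSup hfin.bddAbove ⟨z', h, rfl⟩

lemma AT_LP_nonneg {d : ℕ} {Z : Finset (Fin d → ℝ)} (N : Set (Fin d → ℝ)) (p q : ↥Z → ℝ) :
    ∀ x ∈ {x | ∃ γ : ↥Z × ↥Z → ℝ, IsCoupling γ p q ∧
      x = ∑ w : ↥Z × ↥Z,
        Set.indicator {w : ↥Z × ↥Z | ¬ ((w.2 : Fin d → ℝ) - (w.1 : Fin d → ℝ)) ∈ N} γ w},
    (0 : ℝ) ≤ x := by
  rintro x ⟨γ, hγ, rfl⟩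
  exact Finset.sum_nonneg fun w _ => Set.indicator_nonneg (fun a _ => hγ.1 a) w

lemma AT_exists_worst {d : ℕ} (Z : Finset (Fin d → ℝ)) (N : Set (Fin d → ℝ))
    (h0 : (0 : Fin d → ℝ) ∈ N) (f : ↥Z → ℝ) (p : ↥Z → ℝ) (hp : IsDist p) :
    ∃ q : ↥Z → ℝ, IsDist q ∧ LPmetric N p q ≤ 0 ∧ expect q f = expect p (advLoss Z N f) := by
  choose b hbN hbv using fun z => (AT_advLoss_spec Z N h0 f z).1
  classical
  refine ⟨fun z' => ∑ z, if b z = z' then p z else 0, ⟨?_, ?_⟩, ?_, ?_⟩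
  · intro z'
    refine Finset.sum_nonneg fun z _ => ?_
    split
    · exact hp.1 z
    · exact le_rfl
  · rw [Finset.sum_comm]
    rw [Finset.sum_congr rfl fun z _ => Finset.sum_ite_eq Finset.univ (b z) (fun _ => p z)]
    simpa using hp.2
  · -- LPmetric ≤ 0
    apply csInf_le
    · exact ⟨0, AT_LP_nonneg N p _⟩
    · refine ⟨fun w => if b w.1 = w.2 then p w.1 else 0, ⟨?_, ?_, ?_⟩, ?_⟩
      · intro w
        simp only
        split
        · exact hp.1 w.1
        · exact le_rfl
      · intro z
        show (∑ z' : ↥Z, if b z = z' then p z else 0) = p z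
        rw [Finset.sum_ite_eq Finset.univ (b z) (fun _ => p z)]
        simp
      · intro z'; rfl
      · symm
        refine Finset.sum_eq_zero fun w _ => ?_
        by_cases hw : w ∈ {w : ↥Z × ↥Z | ¬ ((w.2 : Fin d → ℝ) - (w.1 : Fin d → ℝ)) ∈ N}
        · rw [Set.indicator_of_mem hw]
          by_cases he : b w.1 = w.2
          · exact absurd (he ▸ hbN w.1) hw
          · exact if_neg he
        · exact Set.indicator_of_notMem hw _
  · unfold expect
    rw [Finset.sum_congr rfl fun z' _ => by rw [Finset.sum_mul]]
    rw [Finset.sum_comm]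
    refine Finset.sum_congr rfl fun z _ => ?_
    rw [Finset.sum_congr rfl fun z' (_ : z' ∈ Finset.univ) => (by
      split <;> simp_all : (if b z = z' then p z else 0) * f z'
        = if b z = z' then p z * f (b z) else 0)]
    rw [Finset.sum_ite_eq Finset.univ (b z) (fun _ => p z * f (b z))]
    simp [hbv z]

lemma AT_expect_le_advLoss {d : ℕ} (Z : Finset (Fin d → ℝ)) (N : Set (Fin d → ℝ))
    (h0 : (0 : Fin d → ℝ) ∈ N) (f : ↥Z → ℝ) (C : ℝ) (hf : ∀ z, |f z| ≤ C)
    (p q : ↥Z → ℝ) (hp : IsDist p) (hq : IsDist q) (hLP : LPmetric N p q ≤ 0) :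
    expect q f ≤ expect p (advLoss Z N f) := by
  have hZ : Nonempty ↥Z := AT_nonempty_of_isDist hp
  have hC : 0 ≤ C := le_trans (abs_nonneg _) (hf (Classical.arbitrary ↥Z))
  refine le_of_forall_pos_le_add fun ε hε => ?_
  set bad : Set (↥Z × ↥Z) :=
    {w : ↥Z × ↥Z | ¬ ((w.2 : Fin d → ℝ) - (w.1 : Fin d → ℝ)) ∈ N} with hbad
  set S : Set ℝ := {x | ∃ γ : ↥Z × ↥Z → ℝ, IsCoupling γ p q ∧
      x = ∑ w : ↥Z × ↥Z, Set.indicator bad γ w} with hS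
  have hSne : S.Nonempty := by
    refine ⟨_, fun w => p w.1 * q w.2, ⟨?_, ?_, ?_⟩, rfl⟩
    · intro w; exact mul_nonneg (hp.1 w.1) (hq.1 w.2)
    · intro z
      show (∑ z' : ↥Z, p z * q z') = p z
      rw [← Finset.mul_sum, hq.2, mul_one]
    · intro z'
      show (∑ z : ↥Z, p z * q z') = q z'
      rw [← Finset.sum_mul, hp.2, one_mul]
  have hεpos : 0 < ε / (2 * C + 1) := by positivity
  obtain ⟨x, hxS, hxlt⟩ := exists_lt_of_csInf_lt hSne (lt_of_le_of_lt hLP hεpos)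
  obtain ⟨γ, hγ, rfl⟩ := hxS
  have hx0 : 0 ≤ ∑ w : ↥Z × ↥Z, Set.indicator bad γ w :=
    AT_LP_nonneg N p q _ ⟨γ, hγ, rfl⟩
  have hexp : expect q f = ∑ w : ↥Z × ↥Z, γ w * f w.2 := by
    rw [expect, Fintype.sum_prod_type, Finset.sum_comm]
    refine Finset.sum_congr rfl fun z' _ => ?_
    rw [← hγ.2.2 z', Finset.sum_mul]
  have hbound : ∀ w : ↥Z × ↥Z,
      γ w * f w.2 ≤ γ w * advLoss Z N f w.1 + (2 * C) * Set.indicator bad γ w := by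
    intro w
    have hub := (AT_advLoss_spec Z N h0 f w.1).2
    have hlb : -C ≤ advLoss Z N f w.1 := by
      have := hub w.1 (by rw [sub_self]; exact h0)
      have := abs_le.1 (hf w.1)
      linarith
    have hfu := abs_le.1 (hf w.2)
    have hγ0 := hγ.1 w
    by_cases hw : w ∈ bad
    · rw [Set.indicator_of_mem hw]
      nlinarith [hfu.2, hγ0, hlb]
    · rw [Set.indicator_of_notMem hw, mul_zero, add_zero]
      have hwN : ((w.2 : Fin d → ℝ) - (w.1 : Fin d → ℝ)) ∈ N := not_not.1 hw
      exact mul_le_mul_of_nonneg_left (hub w.2 hwN) hγ0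
  have hsum : ∑ w : ↥Z × ↥Z, γ w * advLoss Z N f w.1 = expect p (advLoss Z N f) := by
    rw [expect, Fintype.sum_prod_type]
    refine Finset.sum_congr rfl fun z _ => ?_
    rw [← hγ.2.1 z, Finset.sum_mul]
  calc expect q f ≤ ∑ w : ↥Z × ↥Z,
        (γ w * advLoss Z N f w.1 + (2 * C) * Set.indicator bad γ w) := by
        rw [hexp]; exact Finset.sum_le_sum fun w _ => hbound w
    _ = expect p (advLoss Z N f) + (2 * C) * ∑ w : ↥Z × ↥Z, Set.indicator bad γ w := by
        rw [Finset.sum_add_distrib, hsum, ← Finset.mul_sum]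
    _ ≤ expect p (advLoss Z N f) + ε := by
        have h1 : (2 * C + 1) * (∑ w : ↥Z × ↥Z, Set.indicator bad γ w)
            < (2 * C + 1) * (ε / (2 * C + 1)) :=
          mul_lt_mul_of_pos_left hxlt (by linarith)
        have h2 : (2 * C + 1) * (ε / (2 * C + 1)) = ε := by field_simp
        nlinarith [hx0]

end AuxLemmas
/-- Theorem: decomposition of the AT overfitting gap.  Under the
saddle-point assumption, `G_AT(S_n, ℓ) = G_ERM(S_n^AT, ℓ) + G_SHIFT(S_n, ℓ)` with
`G_SHIFT ≥ 0`, so in particular `G_AT(S_n, ℓ) ≥ G_ERM(S_n^AT, ℓ)`.  Here `S_n` is the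
law of the empirical distribution `emp n ω` of `n` i.i.d. samples `ω` from `D`;
`θAT p` is the AT solution for data distribution `p`, `advD p θ ∈ U_N(p)` is the
worst-case adversary of model `θ`, `p^AT := advD p (θAT p)`, and `θsel` selects the
(unique) ERM minimizer.  All expectations over `S_n` are finite sums weighted by
`prodw D n ω`. -/
theorem at_overfitting_gap_decomposition {d : ℕ} {Θ : Type*} (Z : Finset (Fin d → ℝ))
    (N : Set (Fin d → ℝ)) (h0 : (0 : Fin d → ℝ) ∈ N) (hN : IsCompact N)
    (ℓ : Θ → ↥Z → ℝ) (C : ℝ) (hbdd : ∀ θ z, |ℓ θ z| ≤ C)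
    (D : ↥Z → ℝ) (hD : IsDist D) (n : ℕ) (hn : 0 < n)
    (θAT : (↥Z → ℝ) → Θ)
    (hθAT : ∀ p : ↥Z → ℝ, IsDist p → ∀ θ : Θ, ATval Z N ℓ p (θAT p) ≤ ATval Z N ℓ p θ)
    (advD : (↥Z → ℝ) → Θ → (↥Z → ℝ))
    (hadv : ∀ p : ↥Z → ℝ, IsDist p → ∀ θ : Θ,
      IsDist (advD p θ) ∧ LPmetric N p (advD p θ) ≤ 0 ∧
        ∀ q : ↥Z → ℝ, IsDist q → LPmetric N p q ≤ 0 →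
          expect q (ℓ θ) ≤ expect (advD p θ) (ℓ θ))
    -- Saddle-point assumption (Assumption 3.1):
    (hsaddle : ∀ p : ↥Z → ℝ, IsDist p → ∀ θ : Θ, ∀ q : ↥Z → ℝ,
      IsDist q → LPmetric N p q ≤ 0 →
        expect q (ℓ (θAT p)) ≤ expect (advD p (θAT p)) (ℓ θ))
    -- `θsel` selects the ERM minimizer, assumed unique:
    (θsel : (↥Z → ℝ) → Θ)
    (hsel : ∀ p : ↥Z → ℝ, IsDist p → ∀ θ : Θ,
      expect p (ℓ (θsel p)) ≤ expect p (ℓ θ))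
    (huniq : ∀ p : ↥Z → ℝ, IsDist p → ∀ θ : Θ,
      (∀ θ' : Θ, expect p (ℓ θ) ≤ expect p (ℓ θ')) → θ = θsel p) :
    -- G_AT = G_ERM(S_n^AT) + G_SHIFT  and  G_SHIFT ≥ 0 :
    (∑ ω : Fin n → ↥Z, prodw D n ω *
        (expect D (advLoss Z N (ℓ (θAT (emp n ω))))
          - expect (emp n ω) (advLoss Z N (ℓ (θAT (emp n ω))))))
      = (∑ ω₁ : Fin n → ↥Z, ∑ ω₂ : Fin n → ↥Z, prodw D n ω₁ * prodw D n ω₂ *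
          (expect (advD (emp n ω₂) (θAT (emp n ω₂)))
              (ℓ (θsel (advD (emp n ω₁) (θAT (emp n ω₁)))))
            - expect (advD (emp n ω₂) (θAT (emp n ω₂)))
                (ℓ (θsel (advD (emp n ω₂) (θAT (emp n ω₂)))))))
        + (∑ ω₁ : Fin n → ↥Z, ∑ ω₂ : Fin n → ↥Z, prodw D n ω₁ * prodw D n ω₂ *
            (expect (advD (emp n ω₂) (θAT (emp n ω₁))) (ℓ (θAT (emp n ω₁)))
              - expect (advD (emp n ω₂) (θAT (emp n ω₂))) (ℓ (θAT (emp n ω₁)))))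
    ∧ 0 ≤ (∑ ω₁ : Fin n → ↥Z, ∑ ω₂ : Fin n → ↥Z, prodw D n ω₁ * prodw D n ω₂ *
            (expect (advD (emp n ω₂) (θAT (emp n ω₁))) (ℓ (θAT (emp n ω₁)))
              - expect (advD (emp n ω₂) (θAT (emp n ω₂))) (ℓ (θAT (emp n ω₁)))))
    ∧ (∑ ω₁ : Fin n → ↥Z, ∑ ω₂ : Fin n → ↥Z, prodw D n ω₁ * prodw D n ω₂ *
          (expect (advD (emp n ω₂) (θAT (emp n ω₂)))
              (ℓ (θsel (advD (emp n ω₁) (θAT (emp n ω₁)))))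
            - expect (advD (emp n ω₂) (θAT (emp n ω₂)))
                (ℓ (θsel (advD (emp n ω₂) (θAT (emp n ω₂)))))))
        ≤ (∑ ω : Fin n → ↥Z, prodw D n ω *
            (expect D (advLoss Z N (ℓ (θAT (emp n ω))))
              - expect (emp n ω) (advLoss Z N (ℓ (θAT (emp n ω)))))) := by
  have hemp : ∀ ω : Fin n → ↥Z, IsDist (emp n ω) := fun ω => AT_isDist_emp hn ω
  -- Claim A: expectation of adversarial loss equals worst-case adversary expectation
  have claimA : ∀ p : ↥Z → ℝ, IsDist p → ∀ θ : Θ,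
      expect p (advLoss Z N (ℓ θ)) = expect (advD p θ) (ℓ θ) := by
    intro p hp θ
    obtain ⟨hqd, hqLP, hqmax⟩ := hadv p hp θ
    obtain ⟨q, hq, hLP, hval⟩ := AT_exists_worst Z N h0 (ℓ θ) p hp
    have h1 : expect (advD p θ) (ℓ θ) ≤ expect p (advLoss Z N (ℓ θ)) :=
      AT_expect_le_advLoss Z N h0 (ℓ θ) C (hbdd θ) p _ hp hqd hqLP
    have h2 := hqmax q hq hLP
    linarith
  -- The AT solution is the ERM solution for the worst-case adversarial distribution
  have hθeq : ∀ p : ↥Z → ℝ, IsDist p → θAT p = θsel (advD p (θAT p)) := by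
    intro p hp
    obtain ⟨hd, hLP, _⟩ := hadv p hp (θAT p)
    exact huniq _ hd (θAT p) (fun θ' => hsaddle p hp θ' _ hd hLP)
  have hA : ∀ ω : Fin n → ↥Z,
      θsel (advD (emp n ω) (θAT (emp n ω))) = θAT (emp n ω) :=
    fun ω => (hθeq _ (hemp ω)).symm
  have hCA : ∀ (ω : Fin n → ↥Z) (θ : Θ),
      expect (advD (emp n ω) θ) (ℓ θ) = expect (emp n ω) (advLoss Z N (ℓ θ)) :=
    fun ω θ => (claimA _ (hemp ω) θ).symm
  have hw0 : ∀ ω : Fin n → ↥Z, 0 ≤ prodw D n ω :=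
    fun ω => Finset.prod_nonneg fun i _ => hD.1 (ω i)
  have hiid : ∀ g : ↥Z → ℝ,
      ∑ ω : Fin n → ↥Z, prodw D n ω * expect (emp n ω) g = expect D g :=
    fun g => AT_sum_prodw_expect D hD.2 hn g
  have hiid1 : ∑ ω : Fin n → ↥Z, prodw D n ω = 1 := AT_sum_prodw D hD.2 n
  -- the second double sum (G_SHIFT) is nonnegative
  have hBnn : 0 ≤ ∑ ω₁ : Fin n → ↥Z, ∑ ω₂ : Fin n → ↥Z, prodw D n ω₁ * prodw D n ω₂ *
      (expect (advD (emp n ω₂) (θAT (emp n ω₁))) (ℓ (θAT (emp n ω₁)))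
        - expect (advD (emp n ω₂) (θAT (emp n ω₂))) (ℓ (θAT (emp n ω₁)))) := by
    refine Finset.sum_nonneg fun ω₁ _ => Finset.sum_nonneg fun ω₂ _ => ?_
    obtain ⟨hd2, hLP2, _⟩ := hadv (emp n ω₂) (hemp ω₂) (θAT (emp n ω₂))
    obtain ⟨_, _, hmax⟩ := hadv (emp n ω₂) (hemp ω₂) (θAT (emp n ω₁))
    have hle := hmax _ hd2 hLP2
    exact mul_nonneg (mul_nonneg (hw0 ω₁) (hw0 ω₂)) (by linarith)
  -- the decomposition
  have heq : (∑ ω : Fin n → ↥Z, prodw D n ω *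
        (expect D (advLoss Z N (ℓ (θAT (emp n ω))))
          - expect (emp n ω) (advLoss Z N (ℓ (θAT (emp n ω))))))
      = (∑ ω₁ : Fin n → ↥Z, ∑ ω₂ : Fin n → ↥Z, prodw D n ω₁ * prodw D n ω₂ *
          (expect (advD (emp n ω₂) (θAT (emp n ω₂)))
              (ℓ (θsel (advD (emp n ω₁) (θAT (emp n ω₁)))))
            - expect (advD (emp n ω₂) (θAT (emp n ω₂)))
                (ℓ (θsel (advD (emp n ω₂) (θAT (emp n ω₂)))))))
        + (∑ ω₁ : Fin n → ↥Z, ∑ ω₂ : Fin n → ↥Z, prodw D n ω₁ * prodw D n ω₂ *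
            (expect (advD (emp n ω₂) (θAT (emp n ω₁))) (ℓ (θAT (emp n ω₁)))
              - expect (advD (emp n ω₂) (θAT (emp n ω₂))) (ℓ (θAT (emp n ω₁))))) := by
    have hrhs : (∑ ω₁ : Fin n → ↥Z, ∑ ω₂ : Fin n → ↥Z, prodw D n ω₁ * prodw D n ω₂ *
          (expect (advD (emp n ω₂) (θAT (emp n ω₂)))
              (ℓ (θsel (advD (emp n ω₁) (θAT (emp n ω₁)))))
            - expect (advD (emp n ω₂) (θAT (emp n ω₂)))
                (ℓ (θsel (advD (emp n ω₂) (θAT (emp n ω₂)))))))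
        + (∑ ω₁ : Fin n → ↥Z, ∑ ω₂ : Fin n → ↥Z, prodw D n ω₁ * prodw D n ω₂ *
            (expect (advD (emp n ω₂) (θAT (emp n ω₁))) (ℓ (θAT (emp n ω₁)))
              - expect (advD (emp n ω₂) (θAT (emp n ω₂))) (ℓ (θAT (emp n ω₁)))))
        = ∑ ω₁ : Fin n → ↥Z, ∑ ω₂ : Fin n → ↥Z,
            (prodw D n ω₁ * (prodw D n ω₂ *
                expect (emp n ω₂) (advLoss Z N (ℓ (θAT (emp n ω₁)))))
              - prodw D n ω₁ * (prodw D n ω₂ *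
                expect (emp n ω₂) (advLoss Z N (ℓ (θAT (emp n ω₂)))))) := by
      rw [← Finset.sum_add_distrib]
      refine Finset.sum_congr rfl fun ω₁ _ => ?_
      rw [← Finset.sum_add_distrib]
      refine Finset.sum_congr rfl fun ω₂ _ => ?_
      rw [hA ω₁, hA ω₂, ← hCA ω₂ (θAT (emp n ω₁)), ← hCA ω₂ (θAT (emp n ω₂))]
      ring
    rw [hrhs]
    have hsplit : ∀ ω₁ : Fin n → ↥Z, ∑ ω₂ : Fin n → ↥Z,
        (prodw D n ω₁ * (prodw D n ω₂ *
            expect (emp n ω₂) (advLoss Z N (ℓ (θAT (emp n ω₁)))))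
          - prodw D n ω₁ * (prodw D n ω₂ *
            expect (emp n ω₂) (advLoss Z N (ℓ (θAT (emp n ω₂))))))
        = prodw D n ω₁ * expect D (advLoss Z N (ℓ (θAT (emp n ω₁))))
          - prodw D n ω₁ * (∑ ω₂ : Fin n → ↥Z, prodw D n ω₂ *
              expect (emp n ω₂) (advLoss Z N (ℓ (θAT (emp n ω₂))))) := by
      intro ω₁
      rw [Finset.sum_sub_distrib, ← Finset.mul_sum, ← Finset.mul_sum,
        hiid (advLoss Z N (ℓ (θAT (emp n ω₁))))]
    rw [Finset.sum_congr rfl fun ω₁ _ => hsplit ω₁, Finset.sum_sub_distrib,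
      ← Finset.sum_mul, hiid1, one_mul]
    rw [Finset.sum_congr rfl fun ω _ => mul_sub (prodw D n ω)
      (expect D (advLoss Z N (ℓ (θAT (emp n ω)))))
      (expect (emp n ω) (advLoss Z N (ℓ (θAT (emp n ω)))))]
    rw [Finset.sum_sub_distrib]
  exact ⟨heq, hBnn, by linarith⟩
end
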